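/- arXiv:2005.03095 — 12 statements merged into one kernel-verified Lean document; each statement's English description precedes it below -/
import Mathlib

section
/- The OPT-1 mechanism for the Egalitarian objective is strategy-proof: for every agent i, every true preference t_i ∈ {−1,0,1}, every vector t_{−i} of the other agents' declared preferences, and every misreport t_i′ ∈ {−1,0,1}, the utility of agent i (with his true preference) at the facility location output by OPT-1 on the truthful profile (t_i, t_{−i}) is greater than or equal to his utility at the location output by OPT-1 on the misreported profile (t_i′, t_{−i}). -/
/-! If agent `i` gained strictly by misreporting, the facility would move from the truthful outcome
`y` to some `y'` with `u_i(y) < u_i(y')`. Any other declared preference of `i` ranks `y'` strictly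
below `y` or is indifferent, and comparing the minima then shows that `y'` is also optimal for the
truthful profile and `y` also optimal for the misreported one. Both outcomes are the least optimal
point in the same fixed order, so `y = y'`, a contradiction. -/

open Finset

section LeastMaximizer

variable {E α : Type*} [Preorder α]

def IsLeastMaximizer (r : E → E → Prop) (S : Set E) (F : E → α) (y : E) : Prop :=
  y ∈ S ∧ (∀ z ∈ S, F z ≤ F y) ∧ ∀ y' ∈ S, (∀ z ∈ S, F z ≤ F y') → r y y'

theorem IsLeastMaximizer.eq {r : E → E → Prop} {S : Set E} {F G : E → α} {y y' : E}
    (hanti : ∀ a ∈ S, ∀ b ∈ S, r a b → r b a → a = b)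
    (hy : IsLeastMaximizer r S F y) (hy' : IsLeastMaximizer r S G y')
    (hF : F y ≤ F y') (hG : G y' ≤ G y) : y = y' :=
  hanti y hy.1 y' hy'.1 (hy.2.2 y' hy'.1 fun z hz => (hy.2.1 z hz).trans hF)
    (hy'.2.2 y hy.1 fun z hz => (hy'.2.1 z hz).trans hG)

end LeastMaximizer

theorem inf_le_inf_and_inf_le_inf_of_lt {α : Type*} [LinearOrder α] [OrderTop α]
    {m₁ m₂ a₁ a₂ b₁ b₂ : α} (hf : m₂ ⊓ a₂ ≤ m₁ ⊓ a₁) (ha : a₁ < a₂)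
    (hh : m₁ ⊓ b₁ ≤ m₂ ⊓ b₂) (hb : b₂ < b₁ ∨ b₁ = ⊤) :
    m₁ ⊓ a₁ ≤ m₂ ⊓ a₂ ∧ m₂ ⊓ b₂ ≤ m₁ ⊓ b₁ := by
  have hma : m₂ ≤ a₂ := by
    by_contra! h
    rw [inf_eq_right.mpr h.le] at hf
    exact (hf.trans inf_le_right).not_gt ha
  rw [inf_eq_left.mpr hma] at hf ⊢
  have hbb : b₂ ≤ b₁ := hb.elim le_of_lt fun h => h ▸ le_top
  refine ⟨?_, inf_le_inf (hf.trans inf_le_left) hbb⟩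
  rcases le_or_gt m₁ b₁ with hmb | hbm
  · rw [inf_eq_left.mpr hmb] at hh
    exact inf_le_left.trans (hh.trans inf_le_left)
  · rw [inf_eq_right.mpr hbm.le] at hh
    have hb₂ : b₂ < b₁ := hb.resolve_right (hbm.trans_le le_top).ne
    exact absurd (hh.trans inf_le_right) hb₂.not_ge

section Egalitarian

variable {ι P E α : Type*} [Fintype ι] [DecidableEq ι] [LinearOrder α] [OrderTop α]

def egalitarianWelfare (U : ι → P → E → α) (s : ι → P) (z : E) : α :=
  univ.inf fun j => U j (s j) z

theorem egalitarianWelfare_update (U : ι → P → E → α) (s : ι → P) (i : ι) (q : P) (z : E) :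
    egalitarianWelfare U (Function.update s i q) z =
      (univ.erase i).inf (fun j => U j (s j) z) ⊓ U i q z := by
  rw [egalitarianWelfare, ← insert_erase (mem_univ i), inf_insert, inf_comm,
    Function.update_self, erase_insert (notMem_erase i univ)]
  congr 1
  exact inf_congr rfl fun j hj => by rw [Function.update_of_ne (ne_of_mem_erase hj)]

theorem egalitarianWelfare_eq_inf_erase (U : ι → P → E → α) (s : ι → P) (i : ι) (z : E) :
    egalitarianWelfare U s z = (univ.erase i).inf (fun j => U j (s j) z) ⊓ U i (s i) z := by
  rw [← egalitarianWelfare_update, Function.update_eq_self]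

theorem egalitarian_strategyproof {r : E → E → Prop} {S : Set E}
    (hanti : ∀ a ∈ S, ∀ b ∈ S, r a b → r b a → a = b)
    {U : ι → P → E → α} {s : ι → P} {i : ι} {q : P} {y y' : E}
    (hy : IsLeastMaximizer r S (egalitarianWelfare U s) y)
    (hy' : IsLeastMaximizer r S (egalitarianWelfare U (Function.update s i q)) y')
    (hrev : U i (s i) y < U i (s i) y' → U i q y' < U i q y ∨ U i q y = ⊤) :
    U i (s i) y' ≤ U i (s i) y := by
  by_contra! hgain
  simp only [IsLeastMaximizer, egalitarianWelfare_update,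
    egalitarianWelfare_eq_inf_erase U s i] at hy hy'
  obtain ⟨hF, hG⟩ := inf_le_inf_and_inf_le_inf_of_lt (hy.2.1 y' hy'.1) hgain
    (hy'.2.1 y hy.1) (hrev hgain)
  exact hgain.ne (congrArg (U i (s i)) (IsLeastMaximizer.eq hanti hy hy' hF hG))

end Egalitarian

section TernaryPreferences

variable {ι E : Type*} [SeminormedAddCommGroup E]

/-- An agent with preference `0` is left out of the egalitarian minimum; this is encoded by the
utility `⊤`. -/
noncomputable def prefUtility (g : ι → ℤ → ℝ → ℝ) (x : ι → E) (j : ι) (p : ℤ) (z : E) :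
    WithTop ℝ :=
  if p = 0 then ⊤ else (g j p ‖x j - z‖ : WithTop ℝ)

theorem prefUtility_lt_or_eq_top_of_lt {g : ι → ℤ → ℝ → ℝ} {x : ι → E} {j : ι}
    (hgm : StrictMonoOn (g j (-1)) (Set.Ici 0)) (hga : StrictAntiOn (g j 1) (Set.Ici 0))
    {p q : ℤ} (hp : p = -1 ∨ p = 1) (hq : q = -1 ∨ q = 0 ∨ q = 1) (hpq : q ≠ p) {y y' : E}
    (hlt : prefUtility g x j p y < prefUtility g x j p y') :
    prefUtility g x j q y' < prefUtility g x j q y ∨ prefUtility g x j q y = ⊤ := by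
  have hy : ‖x j - y‖ ∈ Set.Ici 0 := norm_nonneg _
  have hy' : ‖x j - y'‖ ∈ Set.Ici 0 := norm_nonneg _
  rcases hp with rfl | rfl <;> rcases hq with rfl | rfl | rfl
  · exact absurd rfl hpq
  · exact Or.inr (if_pos rfl)
  · left
    norm_num [prefUtility] at hlt ⊢
    exact (hga.lt_iff_gt hy' hy).mpr ((hgm.lt_iff_lt hy hy').mp hlt)
  · left
    norm_num [prefUtility] at hlt ⊢
    exact (hgm.lt_iff_lt hy' hy).mpr ((hga.lt_iff_gt hy hy').mp hlt)
  · exact Or.inr (if_pos rfl)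
  · exact absurd rfl hpq

theorem egalitarianWelfare_prefUtility_eq_coe_inf' {g : ι → ℤ → ℝ → ℝ} {x : ι → E}
    [Fintype ι] (t : ι → ℤ) (hne : (univ.filter fun j => t j ≠ 0).Nonempty) (z : E) :
    egalitarianWelfare (prefUtility g x) t z =
      ((univ.filter fun j => t j ≠ 0).inf' hne fun j => g j (t j) ‖x j - z‖ :) := by
  rw [coe_inf', egalitarianWelfare]
  simp only [prefUtility, inf_ite, inf_top, le_top, inf_of_le_right, ne_eq, Function.comp_def]

end TernaryPreferences

theorem opt1_egalitarian_strategyproof_general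
    (d n : ℕ) (x : Fin n → EuclideanSpace ℝ (Fin d))
    (S : Set (EuclideanSpace ℝ (Fin d)))
    (g : Fin n → ℤ → ℝ → ℝ)
    (hgm : ∀ i : Fin n, StrictMonoOn (g i (-1)) (Set.Ici 0))
    (hg0 : ∀ i : Fin n, ∀ a ∈ Set.Ici (0:ℝ), ∀ b ∈ Set.Ici (0:ℝ), g i 0 a = g i 0 b)
    (hga : ∀ i : Fin n, StrictAntiOn (g i 1) (Set.Ici 0))
    -- a linear order ≼ on S
    (le : EuclideanSpace ℝ (Fin d) → EuclideanSpace ℝ (Fin d) → Prop)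
    (hanti : ∀ a ∈ S, ∀ b ∈ S, le a b → le b a → a = b)
    -- the OPT-1 mechanism: on each declared profile it outputs the ≼-least optimizer
    (M : (Fin n → ℤ) → EuclideanSpace ℝ (Fin d))
    (hM : ∀ t : Fin n → ℤ, (∀ i, t i = -1 ∨ t i = 0 ∨ t i = 1) →
      ∀ hne : (Finset.univ.filter (fun i : Fin n => t i ≠ 0)).Nonempty,
        M t ∈ S ∧
        (∀ z ∈ S,
          (Finset.univ.filter (fun i : Fin n => t i ≠ 0)).inf' hne
              (fun i => g i (t i) ‖x i - z‖) ≤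
          (Finset.univ.filter (fun i : Fin n => t i ≠ 0)).inf' hne
              (fun i => g i (t i) ‖x i - M t‖)) ∧
        (∀ y ∈ S,
          (∀ z ∈ S,
            (Finset.univ.filter (fun i : Fin n => t i ≠ 0)).inf' hne
                (fun i => g i (t i) ‖x i - z‖) ≤
            (Finset.univ.filter (fun i : Fin n => t i ≠ 0)).inf' hne
                (fun i => g i (t i) ‖x i - y‖)) → le (M t) y))
    (hM0 : ∀ t : Fin n → ℤ, (∀ i, t i = 0) → M t ∈ S ∧ ∀ y ∈ S, le (M t) y) :
    -- strategy-proofness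
    ∀ (i : Fin n) (t : Fin n → ℤ), (∀ j, t j = -1 ∨ t j = 0 ∨ t j = 1) →
      ∀ t' : ℤ, (t' = -1 ∨ t' = 0 ∨ t' = 1) →
        g i (t i) ‖x i - M (Function.update t i t')‖ ≤ g i (t i) ‖x i - M t‖ := by
  intro i t ht t' ht'
  have hopt : ∀ s : Fin n → ℤ, (∀ j, s j = -1 ∨ s j = 0 ∨ s j = 1) →
      IsLeastMaximizer le S (egalitarianWelfare (prefUtility g x) s) (M s) := by
    intro s hs
    by_cases hne : (univ.filter fun j => s j ≠ 0).Nonempty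
    · simp only [IsLeastMaximizer, egalitarianWelfare_prefUtility_eq_coe_inf' s hne,
        WithTop.coe_le_coe]
      exact hM s hs hne
    · have hzero : ∀ j, s j = 0 := by simpa [filter_nonempty_iff] using hne
      have htop : ∀ z, egalitarianWelfare (prefUtility g x) s z = ⊤ := fun z => by
        simp [egalitarianWelfare, prefUtility, hzero]
      simp only [IsLeastMaximizer, htop, le_refl, implies_true, true_and, true_implies]
      exact hM0 s hzero
  rcases eq_or_ne (t i) 0 with h0 | h0
  · rw [h0]
    exact (hg0 i _ (norm_nonneg _) _ (norm_nonneg _)).le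
  rcases eq_or_ne t' (t i) with rfl | hne
  · rw [Function.update_eq_self]
  have hupd : ∀ j, Function.update t i t' j = -1 ∨ Function.update t i t' j = 0 ∨
      Function.update t i t' j = 1 := by
    intro j
    rcases eq_or_ne j i with rfl | hj
    · simpa using ht'
    · simpa [hj] using ht j
  have hp : t i = -1 ∨ t i = 1 := by have := ht i; omega
  have key := egalitarian_strategyproof hanti (hopt t ht) (hopt _ hupd)
    (prefUtility_lt_or_eq_top_of_lt (hgm i) (hga i) hp ht' hne)
  simpa [prefUtility, h0] using key

/-- The OPT-1 mechanism for the Egalitarian objective is strategy-proof. -/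
theorem opt1_egalitarian_strategyproof
    (d n : ℕ) (x : Fin n → EuclideanSpace ℝ (Fin d))
    (S : Set (EuclideanSpace ℝ (Fin d))) (hS : S.Nonempty)
    (g : Fin n → ℤ → ℝ → ℝ)
    (hgm : ∀ i : Fin n, StrictMonoOn (g i (-1)) (Set.Ici 0))
    (hg0 : ∀ i : Fin n, ∀ a ∈ Set.Ici (0:ℝ), ∀ b ∈ Set.Ici (0:ℝ), g i 0 a = g i 0 b)
    (hga : ∀ i : Fin n, StrictAntiOn (g i 1) (Set.Ici 0))
    -- a linear order ≼ on S
    (le : EuclideanSpace ℝ (Fin d) → EuclideanSpace ℝ (Fin d) → Prop)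
    (hrefl : ∀ a ∈ S, le a a)
    (htrans : ∀ a ∈ S, ∀ b ∈ S, ∀ c ∈ S, le a b → le b c → le a c)
    (hanti : ∀ a ∈ S, ∀ b ∈ S, le a b → le b a → a = b)
    (htotal : ∀ a ∈ S, ∀ b ∈ S, le a b ∨ le b a)
    -- the OPT-1 mechanism: on each declared profile it outputs the ≼-least optimizer
    (M : (Fin n → ℤ) → EuclideanSpace ℝ (Fin d))
    (hM : ∀ t : Fin n → ℤ, (∀ i, t i = -1 ∨ t i = 0 ∨ t i = 1) →
      ∀ hne : (Finset.univ.filter (fun i : Fin n => t i ≠ 0)).Nonempty,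
        M t ∈ S ∧
        (∀ z ∈ S,
          (Finset.univ.filter (fun i : Fin n => t i ≠ 0)).inf' hne
              (fun i => g i (t i) ‖x i - z‖) ≤
          (Finset.univ.filter (fun i : Fin n => t i ≠ 0)).inf' hne
              (fun i => g i (t i) ‖x i - M t‖)) ∧
        (∀ y ∈ S,
          (∀ z ∈ S,
            (Finset.univ.filter (fun i : Fin n => t i ≠ 0)).inf' hne
                (fun i => g i (t i) ‖x i - z‖) ≤
            (Finset.univ.filter (fun i : Fin n => t i ≠ 0)).inf' hne
                (fun i => g i (t i) ‖x i - y‖)) → le (M t) y))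
    (hM0 : ∀ t : Fin n → ℤ, (∀ i, t i = 0) → M t ∈ S ∧ ∀ y ∈ S, le (M t) y) :
    -- strategy-proofness
    ∀ (i : Fin n) (t : Fin n → ℤ), (∀ j, t j = -1 ∨ t j = 0 ∨ t j = 1) →
      ∀ t' : ℤ, (t' = -1 ∨ t' = 0 ∨ t' = 1) →
        g i (t i) ‖x i - M (Function.update t i t')‖ ≤ g i (t i) ‖x i - M t‖ :=
  opt1_egalitarian_strategyproof_general d n x S g hgm hg0 hga le hanti M hM hM0
end

section
/- The OPT-1 mechanism for the Utilitarian objective is strategy-proof: for every agent i, every true preference t_i ∈ {−1,0,1}, every vector t_{−i} of the other agents' declared preferences, and every misreport t_i′ ∈ {−1,0,1}, the utility of agent i (with his true preference) at the facility location output by the mechanism on the truthful profile (t_i, t_{−i}) is greater than or equal to his utility at the location output on the misreported profile (t_i′, t_{−i}). -/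
/-- The OPT-1 mechanism for the Utilitarian objective is strategy-proof. -/
theorem opt1_utilitarian_strategyproof
    (d n : ℕ) (x : Fin n → EuclideanSpace ℝ (Fin d))
    (S : Set (EuclideanSpace ℝ (Fin d))) (hS : S.Nonempty)
    (g : Fin n → ℤ → ℝ → ℝ)
    (hgm : ∀ i : Fin n, StrictMonoOn (g i (-1)) (Set.Ici 0))
    (hg0 : ∀ i : Fin n, ∀ a ∈ Set.Ici (0:ℝ), ∀ b ∈ Set.Ici (0:ℝ), g i 0 a = g i 0 b)
    (hga : ∀ i : Fin n, StrictAntiOn (g i 1) (Set.Ici 0))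
    -- a linear order ≼ on S
    (le : EuclideanSpace ℝ (Fin d) → EuclideanSpace ℝ (Fin d) → Prop)
    (hrefl : ∀ a ∈ S, le a a)
    (htrans : ∀ a ∈ S, ∀ b ∈ S, ∀ c ∈ S, le a b → le b c → le a c)
    (hanti : ∀ a ∈ S, ∀ b ∈ S, le a b → le b a → a = b)
    (htotal : ∀ a ∈ S, ∀ b ∈ S, le a b ∨ le b a)
    -- the mechanism: on each declared profile it outputs the ≼-least maximizer of the
    -- sum of the utilities of the agents with nonzero declared preference
    (M : (Fin n → ℤ) → EuclideanSpace ℝ (Fin d))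
    (hM : ∀ t : Fin n → ℤ, (∀ i, t i = -1 ∨ t i = 0 ∨ t i = 1) → (∃ i, t i ≠ 0) →
        M t ∈ S ∧
        (∀ z ∈ S,
          ∑ i ∈ Finset.univ.filter (fun i : Fin n => t i ≠ 0), g i (t i) ‖x i - z‖ ≤
          ∑ i ∈ Finset.univ.filter (fun i : Fin n => t i ≠ 0), g i (t i) ‖x i - M t‖) ∧
        (∀ y ∈ S,
          (∀ z ∈ S,
            ∑ i ∈ Finset.univ.filter (fun i : Fin n => t i ≠ 0), g i (t i) ‖x i - z‖ ≤
            ∑ i ∈ Finset.univ.filter (fun i : Fin n => t i ≠ 0), g i (t i) ‖x i - y‖) →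
          le (M t) y))
    (hM0 : ∀ t : Fin n → ℤ, (∀ i, t i = 0) → M t ∈ S ∧ ∀ y ∈ S, le (M t) y) :
    -- strategy-proofness
    ∀ (i : Fin n) (t : Fin n → ℤ), (∀ j, t j = -1 ∨ t j = 0 ∨ t j = 1) →
      ∀ t' : ℤ, (t' = -1 ∨ t' = 0 ∨ t' = 1) →
        g i (t i) ‖x i - M (Function.update t i t')‖ ≤ g i (t i) ‖x i - M t‖ := by
  intro i t ht t' ht'
  set u := Function.update t i t' with hu
  by_cases h0 : t i = 0
  · rw [h0]
    exact le_of_eq (hg0 i _ (norm_nonneg _) _ (norm_nonneg _))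
  by_cases heq : t' = t i
  · rw [hu, heq, Function.update_eq_self]
  obtain ⟨haS, hopt, -⟩ := hM t ht ⟨i, h0⟩
  set E := (Finset.univ.filter (fun j : Fin n => t j ≠ 0)).erase i with hE
  have hiF : i ∈ Finset.univ.filter (fun j : Fin n => t j ≠ 0) := by
    simp [h0]
  have hsum_t : ∀ z, ∑ j ∈ Finset.univ.filter (fun j : Fin n => t j ≠ 0),
      g j (t j) ‖x j - z‖ = g i (t i) ‖x i - z‖ + ∑ j ∈ E, g j (t j) ‖x j - z‖ := by
    intro z
    exact (Finset.add_sum_erase _ _ hiF).symm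
  have hut : ∀ j, u j = -1 ∨ u j = 0 ∨ u j = 1 := by
    intro j
    by_cases hj : j = i
    · subst hj; rw [hu, Function.update_self]; exact ht'
    · rw [hu, Function.update_of_ne hj]; exact ht j
  by_cases h0' : t' = 0
  · -- misreport 0
    have hfilt : Finset.univ.filter (fun j : Fin n => u j ≠ 0) = E := by
      ext j
      by_cases hj : j = i
      · subst hj; simp [hu, h0', hE]
      · simp [hu, Function.update_of_ne hj, hE, hj]
    have hsum_u : ∀ z, ∑ j ∈ Finset.univ.filter (fun j : Fin n => u j ≠ 0),
        g j (u j) ‖x j - z‖ = ∑ j ∈ E, g j (t j) ‖x j - z‖ := by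
      intro z
      rw [hfilt]
      refine Finset.sum_congr rfl fun j hj => ?_
      rw [hu, Function.update_of_ne (Finset.ne_of_mem_erase hj)]
    have hb : M u ∈ S ∧ ∑ j ∈ E, g j (t j) ‖x j - M t‖ ≤ ∑ j ∈ E, g j (t j) ‖x j - M u‖ := by
      by_cases hex : ∃ j, u j ≠ 0
      · obtain ⟨hbS, hopt', -⟩ := hM u hut hex
        refine ⟨hbS, ?_⟩
        have := hopt' (M t) haS
        rwa [hsum_u, hsum_u] at this
      · push_neg at hex
        refine ⟨(hM0 u hex).1, ?_⟩
        have hEe : E = ∅ := by rw [← hfilt]; simp [hex]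
        simp [hEe]
    obtain ⟨hbS, hFm⟩ := hb
    have h1 := hopt (M u) hbS
    rw [hsum_t, hsum_t] at h1
    linarith
  · -- misreport the opposite nonzero preference
    have hfilt : Finset.univ.filter (fun j : Fin n => u j ≠ 0)
        = Finset.univ.filter (fun j : Fin n => t j ≠ 0) := by
      ext j
      by_cases hj : j = i
      · subst hj; simp [hu, h0', h0]
      · simp [hu, Function.update_of_ne hj]
    have hsum_u : ∀ z, ∑ j ∈ Finset.univ.filter (fun j : Fin n => u j ≠ 0),
        g j (u j) ‖x j - z‖ = g i t' ‖x i - z‖ + ∑ j ∈ E, g j (t j) ‖x j - z‖ := by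
      intro z
      rw [hfilt, ← Finset.add_sum_erase _ _ hiF, hu, Function.update_self]
      congr 1
      refine Finset.sum_congr rfl fun j hj => ?_
      rw [Function.update_of_ne (Finset.ne_of_mem_erase hj)]
    obtain ⟨hbS, hopt', -⟩ := hM u hut ⟨i, by rw [hu, Function.update_self]; exact h0'⟩
    have h1 := hopt (M u) hbS
    rw [hsum_t, hsum_t] at h1
    have h2 := hopt' (M t) haS
    rw [hsum_u, hsum_u] at h2
    have hra : ‖x i - M t‖ ∈ Set.Ici (0:ℝ) := norm_nonneg _
    have hrb : ‖x i - M u‖ ∈ Set.Ici (0:ℝ) := norm_nonneg _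
    rcases ht i with hti | hti | hti
    · -- t i = -1, so t' = 1 ; goal needs ‖x i - M u‖ ≤ ‖x i - M t‖
      have ht1 : t' = 1 := by
        rcases ht' with h | h | h
        · exact absurd (h.trans hti.symm) heq
        · exact absurd h h0'
        · exact h
      rw [hti]
      rcases lt_trichotomy ‖x i - M u‖ ‖x i - M t‖ with h | h | h
      · exact le_of_lt (hgm i hrb hra h)
      · rw [h]
      · exfalso
        have e1 := hgm i hra hrb h
        have e2 := hga i hra hrb h
        rw [hti] at h1; rw [ht1] at h2
        linarith
    · exact absurd hti h0
    · -- t i = 1, so t' = -1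
      have ht1 : t' = -1 := by
        rcases ht' with h | h | h
        · exact h
        · exact absurd h h0'
        · exact absurd (h.trans hti.symm) heq
      rw [hti]
      rcases lt_trichotomy ‖x i - M t‖ ‖x i - M u‖ with h | h | h
      · exact le_of_lt (hga i hra hrb h)
      · rw [h]
      · exfalso
        have e1 := hga i hrb hra h
        have e2 := hgm i hrb hra h
        rw [hti] at h1; rw [ht1] at h2
        linarith
end

section
/- There is no 0.851-approximate deterministic strategy-proof mechanism for the 2-facility game, even with two agents at known locations: let ℓ = 1 and let the two agents have publicly known locations x₁ = 0 and x₂ = (13 − √41)/8. For every function M : ({−1,0,1}²)² → [0,1]² that is strategy-proof with respect to misreports of preferences (for each agent i ∈ {1,2}, each profile (t₁,t₂), and each misreport t_i′, the agent's true utility at M(t₁,t₂) is at least his true utility at the output of M on the profile with t_i replaced by t_i′), there exists a preference profile (t₁,t₂) ∈ ({−1,0,1}²)² such that min_{i∈{1,2}} u(x_i, t_i, M(t₁,t₂)) < 0.851 · sup_{y∈[0,1]²} min_{i∈{1,2}} u(x_i, t_i, y). -/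
/-- Utility an agent at `x` with preference `t` for a single facility at `yj`
(segment `[0,ℓ]`): distance if `t = -1`, constant `ℓ` if `t = 0`, `ℓ` minus
distance if `t = 1`. -/
noncomputable def uj (ℓ x : ℝ) (t : ℤ) (yj : ℝ) : ℝ :=
  if t = -1 then |x - yj| else if t = 0 then ℓ else ℓ - |x - yj|

/-- Total utility of an agent at `x` with preference vector `t` for two
facilities placed at `y = (y₁, y₂)`. -/
noncomputable def u2 (ℓ x : ℝ) (t : ℤ × ℤ) (y : ℝ × ℝ) : ℝ :=
  uj ℓ x t.1 y.1 + uj ℓ x t.2 y.2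

/-- Preference vectors with both coordinates in `{-1, 0, 1}`. -/
def validPref : Set (ℤ × ℤ) :=
  {p | (p.1 = -1 ∨ p.1 = 0 ∨ p.1 = 1) ∧ (p.2 = -1 ∨ p.2 = 0 ∨ p.2 = 1)}

/-- Admissible pairs of facility locations: `[0,ℓ]²`. -/
def box (ℓ : ℝ) : Set (ℝ × ℝ) := Set.Icc 0 ℓ ×ˢ Set.Icc 0 ℓ

lemma uj_le_one (t : ℤ) {y : ℝ} (h0 : 0 ≤ y) (h1 : y ≤ 1) : uj 1 0 t y ≤ 1 := by
  unfold uj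
  split_ifs
  · rw [zero_sub, abs_neg, abs_of_nonneg h0]; exact h1
  · exact le_rfl
  · linarith [abs_nonneg ((0:ℝ) - y)]

lemma sup_ge_witness (t1 t2 : ℤ × ℤ) (x : ℝ) {w : ℝ × ℝ} (hw : w ∈ box 1) :
    min (u2 1 0 t1 w) (u2 1 x t2 w) ≤ ⨆ y ∈ box 1, min (u2 1 0 t1 y) (u2 1 x t2 y) := by
  set f : ℝ × ℝ → ℝ := fun y => min (u2 1 0 t1 y) (u2 1 x t2 y) with hf
  have hfle : ∀ y ∈ box 1, f y ≤ 2 := by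
    intro y hy
    have hy1 : y.1 ∈ Set.Icc (0:ℝ) 1 := hy.1
    have hy2 : y.2 ∈ Set.Icc (0:ℝ) 1 := hy.2
    have h1 := uj_le_one t1.1 hy1.1 hy1.2
    have h2 := uj_le_one t1.2 hy2.1 hy2.2
    have : u2 1 0 t1 y ≤ 2 := by unfold u2; linarith
    exact le_trans (min_le_left _ _) this
  have hbdd : BddAbove (Set.range fun y => ⨆ _ : y ∈ box 1, f y) := by
    refine ⟨2, ?_⟩
    rintro v ⟨y, rfl⟩
    dsimp only
    by_cases hy : y ∈ box 1
    · rw [ciSup_pos hy]; exact hfle y hy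
    · haveI : IsEmpty (y ∈ box 1) := ⟨hy⟩
      rw [Real.iSup_of_isEmpty]; norm_num
  calc f w = ⨆ _ : w ∈ box 1, f w := by rw [ciSup_pos hw]
    _ ≤ ⨆ y, ⨆ _ : y ∈ box 1, f y := le_ciSup hbdd w

set_option maxHeartbeats 2000000 in
/-- no 0.851-approximate deterministic strategy-proof mechanism for the
2-facility game, even with two agents at known locations `0` and `(13-√41)/8`. -/
theorem no_deterministic_sp_mechanism_above_0851
    (x2 : ℝ) (hx2 : x2 = (13 - Real.sqrt 41) / 8)
    (M : (ℤ × ℤ) → (ℤ × ℤ) → ℝ × ℝ)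
    (hbox : ∀ t1 ∈ validPref, ∀ t2 ∈ validPref, M t1 t2 ∈ box 1)
    (hsp1 : ∀ t1 ∈ validPref, ∀ t2 ∈ validPref, ∀ t1' ∈ validPref,
      u2 1 0 t1 (M t1' t2) ≤ u2 1 0 t1 (M t1 t2))
    (hsp2 : ∀ t1 ∈ validPref, ∀ t2 ∈ validPref, ∀ t2' ∈ validPref,
      u2 1 x2 t2 (M t1 t2') ≤ u2 1 x2 t2 (M t1 t2)) :
    ∃ t1 ∈ validPref, ∃ t2 ∈ validPref,
      min (u2 1 0 t1 (M t1 t2)) (u2 1 x2 t2 (M t1 t2)) <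
        0.851 * ⨆ y ∈ box 1, min (u2 1 0 t1 y) (u2 1 x2 t2 y) := by
  by_contra hcon
  push_neg at hcon
  -- numeric bounds on x2
  have hs0 : (0:ℝ) ≤ Real.sqrt 41 := Real.sqrt_nonneg _
  have hs2 : Real.sqrt 41 ^ 2 = 41 := Real.sq_sqrt (by norm_num)
  have hsl : (6.4:ℝ) < Real.sqrt 41 := by nlinarith
  have hsu : Real.sqrt 41 < 6.41 := by nlinarith
  have hxl : (0.8237:ℝ) < x2 := by rw [hx2]; linarith
  have hxu : x2 < 0.825 := by rw [hx2]; linarith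
  -- preferences
  set tN : ℤ × ℤ := (-1, -1) with htN
  set tA : ℤ × ℤ := (-1, 0) with htA
  set tB : ℤ × ℤ := (0, -1) with htB
  have hvN : tN ∈ validPref := by simp [validPref, htN]
  have hvA : tA ∈ validPref := by simp [validPref, htA]
  have hvB : tB ∈ validPref := by simp [validPref, htB]
  -- outputs
  set z : ℝ × ℝ := M tN tN with hz
  set a : ℝ × ℝ := M tN tA with ha
  set b : ℝ × ℝ := M tN tB with hb
  have hzbox := hbox tN hvN tN hvN
  have habox := hbox tN hvN tA hvA
  have hbbox := hbox tN hvN tB hvB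
  have hz1 : z.1 ∈ Set.Icc (0:ℝ) 1 := hzbox.1
  have hz2 : z.2 ∈ Set.Icc (0:ℝ) 1 := hzbox.2
  have ha1 : a.1 ∈ Set.Icc (0:ℝ) 1 := habox.1
  have ha2 : a.2 ∈ Set.Icc (0:ℝ) 1 := habox.2
  have hb1 : b.1 ∈ Set.Icc (0:ℝ) 1 := hbbox.1
  have hb2 : b.2 ∈ Set.Icc (0:ℝ) 1 := hbbox.2
  -- key approximation consequences
  have key : ∀ t2 ∈ validPref, ∀ w ∈ box 1,
      0.851 * min (u2 1 0 tN w) (u2 1 x2 t2 w) ≤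
        min (u2 1 0 tN (M tN t2)) (u2 1 x2 t2 (M tN t2)) := by
    intro t2 ht2 w hw
    have h1 := hcon tN hvN t2 ht2
    have h2 := sup_ge_witness tN t2 x2 hw
    calc 0.851 * min (u2 1 0 tN w) (u2 1 x2 t2 w)
        ≤ 0.851 * ⨆ y ∈ box 1, min (u2 1 0 tN y) (u2 1 x2 t2 y) := by
          exact mul_le_mul_of_nonneg_left h2 (by norm_num)
      _ ≤ _ := h1
  -- witnesses
  have hwZ : ((0:ℝ), (1:ℝ)) ∈ box 1 := by
    constructor <;> constructor <;> norm_num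
  have hwA : ((x2/2 : ℝ), (1:ℝ)) ∈ box 1 :=
    ⟨⟨by linarith, by linarith⟩, by constructor <;> norm_num⟩
  have hwB : ((1:ℝ), (x2/2 : ℝ)) ∈ box 1 :=
    ⟨⟨by norm_num, by norm_num⟩, ⟨by linarith, by linarith⟩⟩
  have hx0 : (0:ℝ) ≤ x2 := by linarith
  have hx1 : x2 ≤ 1 := by linarith
  have eabs1 : ∀ w : ℝ, w ≤ x2 → |x2 - w| = x2 - w := fun w hw => abs_of_nonneg (by linarith)
  have eabs2 : ∀ w : ℝ, x2 ≤ w → |x2 - w| = w - x2 := fun w hw => by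
    rw [abs_of_nonpos (by linarith)]; ring
  -- utility formulas
  have uAg1 : ∀ y : ℝ × ℝ, 0 ≤ y.1 → 0 ≤ y.2 → u2 1 0 tN y = y.1 + y.2 := by
    intro y h1 h2
    simp only [htN, u2, uj]
    norm_num
    rw [abs_of_nonneg h1, abs_of_nonneg h2]
  have uN2 : ∀ y : ℝ × ℝ, u2 1 x2 tN y = |x2 - y.1| + |x2 - y.2| := by
    intro y; simp only [htN, u2, uj]; norm_num
  have uA2 : ∀ y : ℝ × ℝ, u2 1 x2 tA y = |x2 - y.1| + 1 := by
    intro y; simp only [htA, u2, uj]; norm_num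
  have uB2 : ∀ y : ℝ × ℝ, u2 1 x2 tB y = 1 + |x2 - y.2| := by
    intro y; simp only [htB, u2, uj]; norm_num
  -- witness values
  have wZ1 : (1:ℝ) ≤ u2 1 0 tN ((0:ℝ),(1:ℝ)) := by
    rw [uAg1 _ (le_refl 0) (by norm_num : (0:ℝ) ≤ 1)]; norm_num
  have wZ2 : (1:ℝ) ≤ u2 1 x2 tN ((0:ℝ),(1:ℝ)) := by
    rw [uN2]
    show (1:ℝ) ≤ |x2 - 0| + |x2 - 1|
    rw [eabs1 0 hx0, eabs2 1 hx1]; linarith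
  have wA1 : (1 + x2/2 : ℝ) ≤ u2 1 0 tN ((x2/2 : ℝ),(1:ℝ)) := by
    rw [uAg1 _ (by linarith) (by norm_num : (0:ℝ) ≤ 1)]
    show (1 + x2/2 : ℝ) ≤ x2/2 + 1
    linarith
  have wA2 : (1 + x2/2 : ℝ) ≤ u2 1 x2 tA ((x2/2 : ℝ),(1:ℝ)) := by
    rw [uA2]
    show (1 + x2/2 : ℝ) ≤ |x2 - x2/2| + 1
    rw [eabs1 (x2/2) (by linarith)]; linarith
  have wB1 : (1 + x2/2 : ℝ) ≤ u2 1 0 tN ((1:ℝ),(x2/2 : ℝ)) := by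
    rw [uAg1 _ (by norm_num : (0:ℝ) ≤ 1) (by linarith)]
  have wB2 : (1 + x2/2 : ℝ) ≤ u2 1 x2 tB ((1:ℝ),(x2/2 : ℝ)) := by
    rw [uB2]
    show (1 + x2/2 : ℝ) ≤ 1 + |x2 - x2/2|
    rw [eabs1 (x2/2) (by linarith)]; linarith
  -- approximation consequences
  have hZ : (0.851:ℝ) ≤ min (u2 1 0 tN (M tN tN)) (u2 1 x2 tN (M tN tN)) := by
    calc (0.851:ℝ) = 0.851 * 1 := by norm_num
      _ ≤ 0.851 * min (u2 1 0 tN ((0:ℝ),(1:ℝ))) (u2 1 x2 tN ((0:ℝ),(1:ℝ))) :=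
          mul_le_mul_of_nonneg_left (le_min wZ1 wZ2) (by norm_num)
      _ ≤ _ := key tN hvN _ hwZ
  have hZ1 : (0.851:ℝ) ≤ z.1 + z.2 := by
    have := le_trans hZ (min_le_left _ _)
    rwa [← hz, uAg1 z hz1.1 hz2.1] at this
  have hZ2 : (0.851:ℝ) ≤ |x2 - z.1| + |x2 - z.2| := by
    have := le_trans hZ (min_le_right _ _)
    rwa [← hz, uN2 z] at this
  have hA : 0.851 * (1 + x2/2) ≤ min (u2 1 0 tN (M tN tA)) (u2 1 x2 tA (M tN tA)) := by
    calc 0.851 * (1 + x2/2)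
        ≤ 0.851 * min (u2 1 0 tN ((x2/2 : ℝ),(1:ℝ))) (u2 1 x2 tA ((x2/2 : ℝ),(1:ℝ))) :=
          mul_le_mul_of_nonneg_left (le_min wA1 wA2) (by norm_num)
      _ ≤ _ := key tA hvA _ hwA
  have hA1 : 0.851 * (1 + x2/2) ≤ a.1 + a.2 := by
    have := le_trans hA (min_le_left _ _)
    rwa [← ha, uAg1 a ha1.1 ha2.1] at this
  have hB : 0.851 * (1 + x2/2) ≤ min (u2 1 0 tN (M tN tB)) (u2 1 x2 tB (M tN tB)) := by
    calc 0.851 * (1 + x2/2)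
        ≤ 0.851 * min (u2 1 0 tN ((1:ℝ),(x2/2 : ℝ))) (u2 1 x2 tB ((1:ℝ),(x2/2 : ℝ))) :=
          mul_le_mul_of_nonneg_left (le_min wB1 wB2) (by norm_num)
      _ ≤ _ := key tB hvB _ hwB
  have hB1 : 0.851 * (1 + x2/2) ≤ b.1 + b.2 := by
    have := le_trans hB (min_le_left _ _)
    rwa [← hb, uAg1 b hb1.1 hb2.1] at this
  -- strategy-proofness consequences
  have hS1 : |x2 - z.1| ≤ |x2 - a.1| := by
    have := hsp2 tN hvN tA hvA tN hvN
    rw [← hz, ← ha, uA2 z, uA2 a] at this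
    linarith
  have hS2 : |x2 - z.2| ≤ |x2 - b.2| := by
    have := hsp2 tN hvN tB hvB tN hvN
    rw [← hz, ← hb, uB2 z, uB2 b] at this
    linarith
  -- final case analysis
  have hz1u : z.1 ≤ 1 := hz1.2
  have hz2u : z.2 ≤ 1 := hz2.2
  have ha1l : (0:ℝ) ≤ a.1 := ha1.1
  have ha2u : a.2 ≤ 1 := ha2.2
  have hb2l : (0:ℝ) ≤ b.2 := hb2.1
  have ha1u : a.1 ≤ 1 := ha1.2
  have hb2u : b.2 ≤ 1 := hb2.2
  have hz1l : (0:ℝ) ≤ z.1 := hz1.1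
  have hz2l : (0:ℝ) ≤ z.2 := hz2.1
  have hb1u : b.1 ≤ 1 := hb1.2
  rcases abs_cases (x2 - z.1) with ⟨e1, s1⟩ | ⟨e1, s1⟩ <;>
  rcases abs_cases (x2 - z.2) with ⟨e2, s2⟩ | ⟨e2, s2⟩ <;>
  rcases abs_cases (x2 - a.1) with ⟨e3, s3⟩ | ⟨e3, s3⟩ <;>
  rcases abs_cases (x2 - b.2) with ⟨e4, s4⟩ | ⟨e4, s4⟩ <;>
  rw [e1, e2] at hZ2 <;> rw [e1, e3] at hS1 <;> rw [e2, e4] at hS2 <;>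
  linarith
end

section
/- Fixed is the optimal deterministic mechanism when no communication is allowed: for ℓ = 1 and for every fixed pair (y₁, y₂) ∈ [0,1]², there exists a single-agent instance, i.e., a location x ∈ [0,1] and a preference vector t ∈ {−1,0,1}², such that u(x, t, (y₁, y₂)) ≤ (1 − √2/2) · sup_{y∈[0,1]²} u(x, t, y). Consequently, no deterministic mechanism that outputs the same pair of facility locations on every instance achieves an approximation ratio strictly greater than 1 − √2/2 for the Egalitarian objective. -/
lemma uj_neg (x yj : ℝ) : uj 1 x (-1) yj = |x - yj| := by simp [uj]

lemma uj_one (x yj : ℝ) : uj 1 x 1 yj = 1 - |x - yj| := by norm_num [uj]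

lemma u2_nn (x a b : ℝ) : u2 1 x ((-1 : ℤ), (-1 : ℤ)) (a, b) = |x - a| + |x - b| := by
  unfold u2; dsimp only; rw [uj_neg, uj_neg]

lemma u2_np (x a b : ℝ) : u2 1 x ((-1 : ℤ), (1 : ℤ)) (a, b) = |x - a| + (1 - |x - b|) := by
  unfold u2; dsimp only; rw [uj_neg, uj_one]

lemma u2_pn (x a b : ℝ) : u2 1 x ((1 : ℤ), (-1 : ℤ)) (a, b) = (1 - |x - a|) + |x - b| := by
  unfold u2; dsimp only; rw [uj_neg, uj_one]

lemma uj_le_one_s6 {x yj : ℝ} (hx : x ∈ Set.Icc (0:ℝ) 1) (hy : yj ∈ Set.Icc (0:ℝ) 1)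
    (t : ℤ) : uj 1 x t yj ≤ 1 := by
  obtain ⟨hx0, hx1⟩ := hx; obtain ⟨hy0, hy1⟩ := hy
  have habs : |x - yj| ≤ 1 := by rw [abs_le]; constructor <;> linarith
  unfold uj
  split_ifs
  · exact habs
  · exact le_rfl
  · nlinarith [abs_nonneg (x - yj)]

lemma le_sup_box (x : ℝ) (t : ℤ × ℤ) (hx : x ∈ Set.Icc (0:ℝ) 1) (y₀ : ℝ × ℝ)
    (hy₀ : y₀ ∈ box 1) : u2 1 x t y₀ ≤ ⨆ y ∈ box 1, u2 1 x t y := by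
  have hB : ∀ y ∈ box 1, u2 1 x t y ≤ 2 := by
    rintro ⟨a, b⟩ ⟨ha, hb⟩
    have h1 := uj_le_one_s6 hx ha t.1
    have h2 := uj_le_one_s6 hx hb t.2
    unfold u2; dsimp at *; linarith
  have h0 : u2 1 x t y₀ = ⨆ _ : y₀ ∈ box 1, u2 1 x t y₀ :=
    (ciSup_pos (f := fun _ => u2 1 x t y₀) hy₀).symm
  rw [h0]
  refine le_ciSup (f := fun y => ⨆ _ : y ∈ box 1, u2 1 x t y) ?_ y₀
  refine ⟨2, ?_⟩
  rintro _ ⟨y, rfl⟩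
  exact Real.iSup_le (fun h => hB y h) (by norm_num)

/-- `Fixed` is the optimal deterministic zero-communication
mechanism: for `ℓ = 1`, every fixed pair of facility locations `(y₁, y₂) ∈ [0,1]²`
admits a single-agent instance on which it gets at most a `1 - √2/2` fraction of
the optimal utility. -/
theorem fixed_optimal_no_communication
    (y1 y2 : ℝ) (hy1 : y1 ∈ Set.Icc (0:ℝ) 1) (hy2 : y2 ∈ Set.Icc (0:ℝ) 1) :
    ∃ x ∈ Set.Icc (0:ℝ) 1, ∃ t ∈ validPref,
      u2 1 x t (y1, y2) ≤ (1 - Real.sqrt 2 / 2) * ⨆ y ∈ box 1, u2 1 x t y := by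
  obtain ⟨h10, h11⟩ := hy1
  obtain ⟨h20, h21⟩ := hy2
  have hs2 : Real.sqrt 2 * Real.sqrt 2 = 2 := Real.mul_self_sqrt (by norm_num)
  have hsnn : (0:ℝ) ≤ Real.sqrt 2 := Real.sqrt_nonneg 2
  have hs15 : Real.sqrt 2 ≤ 1.5 := by nlinarith
  set c : ℝ := 1 - Real.sqrt 2 / 2 with hc
  have hc0 : (0:ℝ) ≤ c := by rw [hc]; linarith
  have h01 : (0:ℝ) ∈ Set.Icc (0:ℝ) 1 := by norm_num
  have h11' : (1:ℝ) ∈ Set.Icc (0:ℝ) 1 := by norm_num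
  have hmem : ∀ t : ℤ × ℤ, (t.1 = -1 ∨ t.1 = 0 ∨ t.1 = 1) →
      (t.2 = -1 ∨ t.2 = 0 ∨ t.2 = 1) → t ∈ validPref := fun t h1 h2 => ⟨h1, h2⟩
  rcases le_total y1 y2 with hle | hle
  · -- y1 ≤ y2
    by_cases hA : y2 - y1 ≤ 2 * c * (1 - y1)
    · refine ⟨y1, ⟨h10, h11⟩, ((-1 : ℤ), (-1 : ℤ)), hmem _ (by norm_num) (by norm_num), ?_⟩
      have hval : u2 1 y1 ((-1 : ℤ), (-1 : ℤ)) (y1, y2) = y2 - y1 := by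
        rw [u2_nn, abs_of_nonpos (by linarith : y1 - y2 ≤ 0)]; simp
      have hopt : u2 1 y1 ((-1 : ℤ), (-1 : ℤ)) (1, 1) = 2 * (1 - y1) := by
        rw [u2_nn, abs_of_nonpos (by linarith : y1 - 1 ≤ 0)]; ring
      have hsup := le_sup_box y1 ((-1 : ℤ), (-1 : ℤ)) ⟨h10, h11⟩ (1, 1) ⟨h11', h11'⟩
      rw [hval]
      calc y2 - y1 ≤ c * (2 * (1 - y1)) := by linarith
        _ = c * u2 1 y1 ((-1 : ℤ), (-1 : ℤ)) (1, 1) := by rw [hopt]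
        _ ≤ c * ⨆ y ∈ box 1, u2 1 y1 ((-1 : ℤ), (-1 : ℤ)) y :=
            mul_le_mul_of_nonneg_left hsup hc0
    · by_cases hB : y2 - y1 ≤ 2 * c * y2
      · refine ⟨y2, ⟨h20, h21⟩, ((-1 : ℤ), (-1 : ℤ)), hmem _ (by norm_num) (by norm_num), ?_⟩
        have hval : u2 1 y2 ((-1 : ℤ), (-1 : ℤ)) (y1, y2) = y2 - y1 := by
          rw [u2_nn, abs_of_nonneg (by linarith : (0:ℝ) ≤ y2 - y1)]; simp
        have hopt : u2 1 y2 ((-1 : ℤ), (-1 : ℤ)) (0, 0) = 2 * y2 := by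
          rw [u2_nn, abs_of_nonneg (by linarith : (0:ℝ) ≤ y2 - 0)]; ring
        have hsup := le_sup_box y2 ((-1 : ℤ), (-1 : ℤ)) ⟨h20, h21⟩ (0, 0) ⟨h01, h01⟩
        rw [hval]
        calc y2 - y1 ≤ c * (2 * y2) := by linarith
          _ = c * u2 1 y2 ((-1 : ℤ), (-1 : ℤ)) (0, 0) := by rw [hopt]
          _ ≤ c * ⨆ y ∈ box 1, u2 1 y2 ((-1 : ℤ), (-1 : ℤ)) y :=
              mul_le_mul_of_nonneg_left hsup hc0
      · refine ⟨0, h01, ((-1 : ℤ), (1 : ℤ)), hmem _ (by norm_num) (by norm_num), ?_⟩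
        have hval : u2 1 0 ((-1 : ℤ), (1 : ℤ)) (y1, y2) = y1 + 1 - y2 := by
          rw [u2_np, abs_of_nonpos (by linarith : (0:ℝ) - y1 ≤ 0),
            abs_of_nonpos (by linarith : (0:ℝ) - y2 ≤ 0)]; ring
        have hopt : u2 1 0 ((-1 : ℤ), (1 : ℤ)) (1, 0) = 2 := by
          rw [u2_np]; norm_num
        have hsup := le_sup_box 0 ((-1 : ℤ), (1 : ℤ)) h01 (1, 0) ⟨h11', h01⟩
        rw [hval]
        push_neg at hA hB
        rw [hc] at hA hB ⊢
        calc y1 + 1 - y2 ≤ (1 - Real.sqrt 2 / 2) * 2 := by nlinarith [hA, hB, hs2, hsnn]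
          _ = (1 - Real.sqrt 2 / 2) * u2 1 0 ((-1 : ℤ), (1 : ℤ)) (1, 0) := by rw [hopt]
          _ ≤ (1 - Real.sqrt 2 / 2) * ⨆ y ∈ box 1, u2 1 0 ((-1 : ℤ), (1 : ℤ)) y :=
              mul_le_mul_of_nonneg_left hsup (by linarith)
  · -- y2 ≤ y1
    by_cases hA : y1 - y2 ≤ 2 * c * (1 - y2)
    · refine ⟨y2, ⟨h20, h21⟩, ((-1 : ℤ), (-1 : ℤ)), hmem _ (by norm_num) (by norm_num), ?_⟩
      have hval : u2 1 y2 ((-1 : ℤ), (-1 : ℤ)) (y1, y2) = y1 - y2 := by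
        rw [u2_nn, abs_of_nonpos (by linarith : y2 - y1 ≤ 0)]; simp
      have hopt : u2 1 y2 ((-1 : ℤ), (-1 : ℤ)) (1, 1) = 2 * (1 - y2) := by
        rw [u2_nn, abs_of_nonpos (by linarith : y2 - 1 ≤ 0)]; ring
      have hsup := le_sup_box y2 ((-1 : ℤ), (-1 : ℤ)) ⟨h20, h21⟩ (1, 1) ⟨h11', h11'⟩
      rw [hval]
      calc y1 - y2 ≤ c * (2 * (1 - y2)) := by linarith
        _ = c * u2 1 y2 ((-1 : ℤ), (-1 : ℤ)) (1, 1) := by rw [hopt]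
        _ ≤ c * ⨆ y ∈ box 1, u2 1 y2 ((-1 : ℤ), (-1 : ℤ)) y :=
            mul_le_mul_of_nonneg_left hsup hc0
    · by_cases hB : y1 - y2 ≤ 2 * c * y1
      · refine ⟨y1, ⟨h10, h11⟩, ((-1 : ℤ), (-1 : ℤ)), hmem _ (by norm_num) (by norm_num), ?_⟩
        have hval : u2 1 y1 ((-1 : ℤ), (-1 : ℤ)) (y1, y2) = y1 - y2 := by
          rw [u2_nn, abs_of_nonneg (by linarith : (0:ℝ) ≤ y1 - y2)]; simp
        have hopt : u2 1 y1 ((-1 : ℤ), (-1 : ℤ)) (0, 0) = 2 * y1 := by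
          rw [u2_nn, abs_of_nonneg (by linarith : (0:ℝ) ≤ y1 - 0)]; ring
        have hsup := le_sup_box y1 ((-1 : ℤ), (-1 : ℤ)) ⟨h10, h11⟩ (0, 0) ⟨h01, h01⟩
        rw [hval]
        calc y1 - y2 ≤ c * (2 * y1) := by linarith
          _ = c * u2 1 y1 ((-1 : ℤ), (-1 : ℤ)) (0, 0) := by rw [hopt]
          _ ≤ c * ⨆ y ∈ box 1, u2 1 y1 ((-1 : ℤ), (-1 : ℤ)) y :=
              mul_le_mul_of_nonneg_left hsup hc0
      · refine ⟨0, h01, ((1 : ℤ), (-1 : ℤ)), hmem _ (by norm_num) (by norm_num), ?_⟩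
        have hval : u2 1 0 ((1 : ℤ), (-1 : ℤ)) (y1, y2) = y2 + 1 - y1 := by
          rw [u2_pn, abs_of_nonpos (by linarith : (0:ℝ) - y1 ≤ 0),
            abs_of_nonpos (by linarith : (0:ℝ) - y2 ≤ 0)]; ring
        have hopt : u2 1 0 ((1 : ℤ), (-1 : ℤ)) (0, 1) = 2 := by
          rw [u2_pn]; norm_num
        have hsup := le_sup_box 0 ((1 : ℤ), (-1 : ℤ)) h01 (0, 1) ⟨h01, h11'⟩
        rw [hval]
        push_neg at hA hB
        rw [hc] at hA hB ⊢
        calc y2 + 1 - y1 ≤ (1 - Real.sqrt 2 / 2) * 2 := by nlinarith [hA, hB, hs2, hsnn]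
          _ = (1 - Real.sqrt 2 / 2) * u2 1 0 ((1 : ℤ), (-1 : ℤ)) (0, 1) := by rw [hopt]
          _ ≤ (1 - Real.sqrt 2 / 2) * ⨆ y ∈ box 1, u2 1 0 ((1 : ℤ), (-1 : ℤ)) y :=
              mul_le_mul_of_nonneg_left hsup (by linarith)
end

section
/- The Random mechanism achieves 1/2 approximation for the Egalitarian objective: for every agent with location x ∈ [0, ℓ] and preferences t ∈ {−1,0,1}², the expected utility (1/2)·u(x, t, (0,0)) + (1/2)·u(x, t, (ℓ,ℓ)) is at least ℓ; consequently, for every profile of n ≥ 1 agents, min_i [(1/2)·u(x_i, t_i, (0,0)) + (1/2)·u(x_i, t_i, (ℓ,ℓ))] ≥ (1/2) · sup_{y∈[0,ℓ]²} min_i u(x_i, t_i, y). -/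
lemma uj_key (ℓ x : ℝ) (hx : x ∈ Set.Icc 0 ℓ) (t : ℤ)
    (ht : t = -1 ∨ t = 0 ∨ t = 1) (hℓ : 0 < ℓ) :
    ℓ ≤ uj ℓ x t 0 + uj ℓ x t ℓ := by
  obtain ⟨h0, h1⟩ := hx
  rcases ht with h | h | h <;> subst h <;> simp [uj] <;>
    first
      | linarith
      | (rw [abs_of_nonneg h0, abs_of_nonpos (by linarith)]; linarith)

lemma uj_le (ℓ x : ℝ) (hx : x ∈ Set.Icc 0 ℓ) (t : ℤ)
    (ht : t = -1 ∨ t = 0 ∨ t = 1) (yj : ℝ) (hy : yj ∈ Set.Icc 0 ℓ) :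
    uj ℓ x t yj ≤ ℓ := by
  obtain ⟨h0, h1⟩ := hx
  obtain ⟨hy0, hy1⟩ := hy
  have habs : |x - yj| ≤ ℓ := abs_le.2 ⟨by linarith, by linarith⟩
  have habs0 : 0 ≤ |x - yj| := abs_nonneg _
  rcases ht with h | h | h <;> subst h <;> simp [uj] <;> linarith

lemma uj_nonneg (ℓ x : ℝ) (hx : x ∈ Set.Icc 0 ℓ) (t : ℤ)
    (ht : t = -1 ∨ t = 0 ∨ t = 1) (yj : ℝ) (hy : yj ∈ Set.Icc 0 ℓ) (hℓ : 0 < ℓ) :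
    0 ≤ uj ℓ x t yj := by
  obtain ⟨h0, h1⟩ := hx
  obtain ⟨hy0, hy1⟩ := hy
  have habs : |x - yj| ≤ ℓ := abs_le.2 ⟨by linarith, by linarith⟩
  have habs0 : 0 ≤ |x - yj| := abs_nonneg _
  rcases ht with h | h | h <;> subst h <;> simp [uj] <;> linarith

/-- the `Random` mechanism (both facilities at `0` with probability
`1/2`, both at `ℓ` with probability `1/2`) gives every agent expected utility at
least `ℓ`, and achieves a `1/2` approximation of the Egalitarian objective. -/
theorem random_egalitarian_approx (ℓ : ℝ) (hℓ : 0 < ℓ) :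
    (∀ x ∈ Set.Icc 0 ℓ, ∀ t ∈ validPref,
      ℓ ≤ (1/2) * u2 ℓ x t (0, 0) + (1/2) * u2 ℓ x t (ℓ, ℓ)) ∧
    (∀ n : ℕ, 0 < n → ∀ x : Fin n → ℝ, ∀ t : Fin n → ℤ × ℤ,
      (∀ i, x i ∈ Set.Icc 0 ℓ) → (∀ i, t i ∈ validPref) →
      (1/2) * (⨆ y ∈ box ℓ, ⨅ i, u2 ℓ (x i) (t i) y) ≤
        ⨅ i, ((1/2) * u2 ℓ (x i) (t i) (0, 0) + (1/2) * u2 ℓ (x i) (t i) (ℓ, ℓ))) := by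
  have main : ∀ x ∈ Set.Icc 0 ℓ, ∀ t ∈ validPref,
      ℓ ≤ (1/2) * u2 ℓ x t (0, 0) + (1/2) * u2 ℓ x t (ℓ, ℓ) := by
    intro x hx t ht
    have h1 := uj_key ℓ x hx t.1 ht.1 hℓ
    have h2 := uj_key ℓ x hx t.2 ht.2 hℓ
    simp only [u2]
    linarith
  refine ⟨main, fun n hn x t hx ht => ?_⟩
  haveI : Nonempty (Fin n) := ⟨⟨0, hn⟩⟩
  have hsup : (⨆ y ∈ box ℓ, ⨅ i, u2 ℓ (x i) (t i) y) ≤ 2 * ℓ := by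
    apply Real.iSup_le _ (by linarith)
    intro y
    apply Real.iSup_le _ (by linarith)
    intro hy
    have : (⨅ i, u2 ℓ (x i) (t i) y) ≤ u2 ℓ (x ⟨0, hn⟩) (t ⟨0, hn⟩) y := by
      apply ciInf_le
      refine ⟨0, fun a ⟨i, hi⟩ => hi ▸ ?_⟩
      have h1 := uj_nonneg ℓ (x i) (hx i) (t i).1 (ht i).1 y.1 hy.1 hℓ
      have h2 := uj_nonneg ℓ (x i) (hx i) (t i).2 (ht i).2 y.2 hy.2 hℓ
      simp only [u2]; linarith
    have h1 := uj_le ℓ (x ⟨0, hn⟩) (hx _) (t ⟨0, hn⟩).1 (ht _).1 y.1 hy.1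
    have h2 := uj_le ℓ (x ⟨0, hn⟩) (hx _) (t ⟨0, hn⟩).2 (ht _).2 y.2 hy.2
    have := this
    simp only [u2] at this ⊢
    linarith
  have hinf : ℓ ≤ ⨅ i, ((1/2) * u2 ℓ (x i) (t i) (0, 0) + (1/2) * u2 ℓ (x i) (t i) (ℓ, ℓ)) :=
    le_ciInf fun i => main (x i) (hx i) (t i) (ht i)
  linarith
end

section
/- The Random⁺ mechanism is strategy-proof in expectation: for every agent i with true location x_i ∈ [0, ℓ] and true preferences t_i ∈ {−1,0,1}², every profile of the other agents' declarations, and every misreport (x_i′, t_i′) ∈ [0, ℓ] × {−1,0,1}² by agent i, the expected true utility of agent i under the output distribution of Random⁺ on the truthful profile is greater than or equal to his expected true utility under the output distribution of Random⁺ on the profile where agent i's declaration is replaced by (x_i′, t_i′). -/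
/-- Event `L_j` (with `pj` selecting the preference for facility `j`): every
agent wants facility `j` below `ℓ/2`. -/
def Lev (ℓ : ℝ) {n : ℕ} (s : Fin n → ℝ × (ℤ × ℤ)) (pj : ℤ × ℤ → ℤ) : Prop :=
  ∀ i, ((s i).1 ≤ ℓ / 2 → pj (s i).2 = 0 ∨ pj (s i).2 = 1) ∧
       (ℓ / 2 < (s i).1 → pj (s i).2 = 0 ∨ pj (s i).2 = -1)

/-- Event `H_j`: every agent wants facility `j` above `ℓ/2`. -/
def Hev (ℓ : ℝ) {n : ℕ} (s : Fin n → ℝ × (ℤ × ℤ)) (pj : ℤ × ℤ → ℤ) : Prop :=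
  ∀ i, ((s i).1 ≤ ℓ / 2 → pj (s i).2 = 0 ∨ pj (s i).2 = -1) ∧
       (ℓ / 2 < (s i).1 → pj (s i).2 = 0 ∨ pj (s i).2 = 1)

open Classical in
/-- Expected utility, for an agent at location `x` with true preferences `t`,
under the output distribution of the `Random⁺` mechanism (with
`z_r = (13 - √161)/8`) on the declared profile `s`: in the first four
(deterministic) cases it is the utility at the output, and in the last case it
is the average of the utilities at the two equiprobable outputs. -/
noncomputable def randomPlusExp (ℓ : ℝ) {n : ℕ} (s : Fin n → ℝ × (ℤ × ℤ))
    (x : ℝ) (t : ℤ × ℤ) : ℝ :=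
  let zr : ℝ := (13 - Real.sqrt 161) / 8
  if Lev ℓ s Prod.fst ∧ Lev ℓ s Prod.snd then u2 ℓ x t (zr * ℓ, zr * ℓ)
  else if Lev ℓ s Prod.fst ∧ Hev ℓ s Prod.snd then u2 ℓ x t (zr * ℓ, (1 - zr) * ℓ)
  else if Hev ℓ s Prod.fst ∧ Hev ℓ s Prod.snd then u2 ℓ x t ((1 - zr) * ℓ, (1 - zr) * ℓ)
  else if Hev ℓ s Prod.fst ∧ Lev ℓ s Prod.snd then u2 ℓ x t ((1 - zr) * ℓ, zr * ℓ)
  else (u2 ℓ x t (zr * ℓ, zr * ℓ) + u2 ℓ x t ((1 - zr) * ℓ, (1 - zr) * ℓ)) / 2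

set_option maxHeartbeats 4000000 in
lemma keyV (A1 B1 A2 B2 D : ℝ) (P1 Q1 P2 Q2 P1' Q1' P2' Q2' : Bool)
    (hD : 0 ≤ D)
    (hP1 : P1 = true → B1 ≤ A1) (hQ1 : Q1 = true → A1 ≤ B1)
    (hP2 : P2 = true → B2 ≤ A2) (hQ2 : Q2 = true → A2 ≤ B2)
    (hP1' : P1' = true → P1 = true ∨ B1 - A1 = D)
    (hQ1' : Q1' = true → Q1 = true ∨ A1 - B1 = D)
    (hP2' : P2' = true → P2 = true ∨ B2 - A2 = D)
    (hQ2' : Q2' = true → Q2 = true ∨ A2 - B2 = D)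
    (hm1 : A1 - B1 ≤ D) (hm1' : B1 - A1 ≤ D)
    (hm2 : A2 - B2 ≤ D) (hm2' : B2 - A2 ≤ D) :
    (if P1' && P2' then A1 + A2 else if P1' && Q2' then A1 + B2
      else if Q1' && Q2' then B1 + B2 else if Q1' && P2' then B1 + A2
      else (A1 + A2 + (B1 + B2)) / 2) ≤
    (if P1 && P2 then A1 + A2 else if P1 && Q2 then A1 + B2
      else if Q1 && Q2 then B1 + B2 else if Q1 && P2 then B1 + A2
      else (A1 + A2 + (B1 + B2)) / 2) := by
  cases P1 <;> cases Q1 <;> cases P2 <;> cases Q2 <;>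
    cases P1' <;> cases Q1' <;> cases P2' <;> cases Q2' <;>
    simp_all <;> linarith

open Classical in
lemma keyVP (A1 B1 A2 B2 D : ℝ) (P1 Q1 P2 Q2 P1' Q1' P2' Q2' : Prop)
    (hD : 0 ≤ D)
    (hP1 : P1 → B1 ≤ A1) (hQ1 : Q1 → A1 ≤ B1)
    (hP2 : P2 → B2 ≤ A2) (hQ2 : Q2 → A2 ≤ B2)
    (hP1' : P1' → P1 ∨ B1 - A1 = D) (hQ1' : Q1' → Q1 ∨ A1 - B1 = D)
    (hP2' : P2' → P2 ∨ B2 - A2 = D) (hQ2' : Q2' → Q2 ∨ A2 - B2 = D)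
    (hm1 : A1 - B1 ≤ D) (hm1' : B1 - A1 ≤ D)
    (hm2 : A2 - B2 ≤ D) (hm2' : B2 - A2 ≤ D) :
    (if P1' ∧ P2' then A1 + A2 else if P1' ∧ Q2' then A1 + B2
      else if Q1' ∧ Q2' then B1 + B2 else if Q1' ∧ P2' then B1 + A2
      else (A1 + A2 + (B1 + B2)) / 2) ≤
    (if P1 ∧ P2 then A1 + A2 else if P1 ∧ Q2 then A1 + B2
      else if Q1 ∧ Q2 then B1 + B2 else if Q1 ∧ P2 then B1 + A2
      else (A1 + A2 + (B1 + B2)) / 2) := by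
  have h := keyV A1 B1 A2 B2 D (decide P1) (decide Q1) (decide P2) (decide Q2)
      (decide P1') (decide Q1') (decide P2') (decide Q2') hD
      (fun h => hP1 (of_decide_eq_true h)) (fun h => hQ1 (of_decide_eq_true h))
      (fun h => hP2 (of_decide_eq_true h)) (fun h => hQ2 (of_decide_eq_true h))
      (fun h => (hP1' (of_decide_eq_true h)).imp decide_eq_true id)
      (fun h => (hQ1' (of_decide_eq_true h)).imp decide_eq_true id)
      (fun h => (hP2' (of_decide_eq_true h)).imp decide_eq_true id)
      (fun h => (hQ2' (of_decide_eq_true h)).imp decide_eq_true id)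
      hm1 hm1' hm2 hm2'
  simpa only [Bool.and_eq_true, decide_eq_true_eq] using h

lemma update_all {n : ℕ} (s : Fin n → ℝ × (ℤ × ℤ)) (i : Fin n) (r : ℝ × (ℤ × ℤ))
    (C : ℝ × (ℤ × ℤ) → Prop) (h : ∀ k, C (Function.update s i r k)) :
    (∀ k, C (s k)) ∨ ¬ C (s i) := by
  classical
  by_cases hc : C (s i)
  · left
    intro k
    by_cases hk : k = i
    · subst hk; exact hc
    · have hk' := h k
      rwa [Function.update_of_ne hk] at hk'
  · right; exact hc

section coord

variable (ℓ x a b : ℝ)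

lemma coordL (habs1 : x ≤ ℓ / 2 → |x - a| ≤ |x - b|)
    (habs2 : ℓ / 2 < x → |x - b| ≤ |x - a|) (τ : ℤ)
    (h1 : x ≤ ℓ / 2 → τ = 0 ∨ τ = 1) (h2 : ℓ / 2 < x → τ = 0 ∨ τ = -1) :
    uj ℓ x τ b ≤ uj ℓ x τ a := by
  rcases le_or_gt x (ℓ / 2) with hx | hx
  · rcases h1 hx with h | h <;> subst h <;> simp only [uj] <;> norm_num <;>
      linarith [habs1 hx]
  · rcases h2 hx with h | h <;> subst h <;> simp only [uj] <;> norm_num <;>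
      linarith [habs2 hx]

lemma coordH (habs1 : x ≤ ℓ / 2 → |x - a| ≤ |x - b|)
    (habs2 : ℓ / 2 < x → |x - b| ≤ |x - a|) (τ : ℤ)
    (h1 : x ≤ ℓ / 2 → τ = 0 ∨ τ = -1) (h2 : ℓ / 2 < x → τ = 0 ∨ τ = 1) :
    uj ℓ x τ a ≤ uj ℓ x τ b := by
  rcases le_or_gt x (ℓ / 2) with hx | hx
  · rcases h1 hx with h | h <;> subst h <;> simp only [uj] <;> norm_num <;>
      linarith [habs1 hx]
  · rcases h2 hx with h | h <;> subst h <;> simp only [uj] <;> norm_num <;>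
      linarith [habs2 hx]

lemma coordNotL (habs1 : x ≤ ℓ / 2 → |x - a| ≤ |x - b|)
    (habs2 : ℓ / 2 < x → |x - b| ≤ |x - a|) (τ : ℤ)
    (hv : τ = -1 ∨ τ = 0 ∨ τ = 1)
    (h : ¬((x ≤ ℓ / 2 → τ = 0 ∨ τ = 1) ∧ (ℓ / 2 < x → τ = 0 ∨ τ = -1))) :
    uj ℓ x τ b - uj ℓ x τ a = |(|x - a| - |x - b|)| := by
  rcases le_or_gt x (ℓ / 2) with hx | hx
  · have hτ : τ = -1 := by
      rcases hv with h' | h' | h'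
      · exact h'
      · exact absurd ⟨fun _ => Or.inl h', fun hc => absurd hc (not_lt.mpr hx)⟩ h
      · exact absurd ⟨fun _ => Or.inr h', fun hc => absurd hc (not_lt.mpr hx)⟩ h
    subst hτ
    have h0 : |(|x - a| - |x - b|)| = |x - b| - |x - a| := by
      rw [abs_sub_comm]
      exact abs_of_nonneg (by linarith [habs1 hx])
    simp only [uj]
    norm_num
    linarith [h0]
  · have hτ : τ = 1 := by
      rcases hv with h' | h' | h'
      · exact absurd ⟨fun hc => absurd hx (not_lt.mpr hc), fun _ => Or.inr h'⟩ h
      · exact absurd ⟨fun hc => absurd hx (not_lt.mpr hc), fun _ => Or.inl h'⟩ h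
      · exact h'
    subst hτ
    have h0 : |(|x - a| - |x - b|)| = |x - a| - |x - b| :=
      abs_of_nonneg (by linarith [habs2 hx])
    simp only [uj]
    norm_num
    linarith [h0]

lemma coordNotH (habs1 : x ≤ ℓ / 2 → |x - a| ≤ |x - b|)
    (habs2 : ℓ / 2 < x → |x - b| ≤ |x - a|) (τ : ℤ)
    (hv : τ = -1 ∨ τ = 0 ∨ τ = 1)
    (h : ¬((x ≤ ℓ / 2 → τ = 0 ∨ τ = -1) ∧ (ℓ / 2 < x → τ = 0 ∨ τ = 1))) :
    uj ℓ x τ a - uj ℓ x τ b = |(|x - a| - |x - b|)| := by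
  rcases le_or_gt x (ℓ / 2) with hx | hx
  · have hτ : τ = 1 := by
      rcases hv with h' | h' | h'
      · exact absurd ⟨fun _ => Or.inr h', fun hc => absurd hc (not_lt.mpr hx)⟩ h
      · exact absurd ⟨fun _ => Or.inl h', fun hc => absurd hc (not_lt.mpr hx)⟩ h
      · exact h'
    subst hτ
    have h0 : |(|x - a| - |x - b|)| = |x - b| - |x - a| := by
      rw [abs_sub_comm]
      exact abs_of_nonneg (by linarith [habs1 hx])
    simp only [uj]
    norm_num
    linarith [h0]
  · have hτ : τ = -1 := by
      rcases hv with h' | h' | h'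
      · exact h'
      · exact absurd ⟨fun hc => absurd hx (not_lt.mpr hc), fun _ => Or.inl h'⟩ h
      · exact absurd ⟨fun hc => absurd hx (not_lt.mpr hc), fun _ => Or.inr h'⟩ h
    subst hτ
    have h0 : |(|x - a| - |x - b|)| = |x - a| - |x - b| :=
      abs_of_nonneg (by linarith [habs2 hx])
    simp only [uj]
    norm_num
    linarith [h0]

lemma coordBound (τ : ℤ) (hv : τ = -1 ∨ τ = 0 ∨ τ = 1) :
    uj ℓ x τ a - uj ℓ x τ b ≤ |(|x - a| - |x - b|)| ∧
      uj ℓ x τ b - uj ℓ x τ a ≤ |(|x - a| - |x - b|)| := by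
  have h1 := le_abs_self (|x - a| - |x - b|)
  have h2 := neg_abs_le (|x - a| - |x - b|)
  rcases hv with h | h | h <;> subst h <;> simp only [uj] <;> norm_num <;>
    constructor <;> linarith

end coord

/-- `Random⁺` is strategy-proof in expectation: no agent can
increase his expected true utility by misreporting his location and/or his
preferences. -/
theorem randomPlus_strategyproof_in_expectation
    (ℓ : ℝ) (hℓ : 0 < ℓ) (n : ℕ)
    (s : Fin n → ℝ × (ℤ × ℤ))
    (hs : ∀ j, (s j).1 ∈ Set.Icc 0 ℓ ∧ (s j).2 ∈ validPref)
    (i : Fin n)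
    (x' : ℝ) (hx' : x' ∈ Set.Icc 0 ℓ) (t' : ℤ × ℤ) (ht' : t' ∈ validPref) :
    randomPlusExp ℓ (Function.update s i (x', t')) (s i).1 (s i).2 ≤
      randomPlusExp ℓ s (s i).1 (s i).2 := by
  classical
  obtain ⟨hxi, hti⟩ := hs i
  have hs161 : Real.sqrt 161 ≤ 13 := by
    rw [show (13 : ℝ) = Real.sqrt 169 by
      rw [show (169 : ℝ) = 13 ^ 2 by norm_num, Real.sqrt_sq (by norm_num)]]
    exact Real.sqrt_le_sqrt (by norm_num)
  have hs161' : (9 : ℝ) ≤ Real.sqrt 161 := by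
    rw [show (9 : ℝ) = Real.sqrt 81 by
      rw [show (81 : ℝ) = 9 ^ 2 by norm_num, Real.sqrt_sq (by norm_num)]]
    exact Real.sqrt_le_sqrt (by norm_num)
  set x : ℝ := (s i).1 with hxdef
  set t : ℤ × ℤ := (s i).2 with htdef
  set zr : ℝ := (13 - Real.sqrt 161) / 8 with hzrdef
  set a : ℝ := zr * ℓ with hadef
  set b : ℝ := (1 - zr) * ℓ with hbdef
  have hzr0 : 0 ≤ zr := by rw [hzrdef]; linarith
  have hzrh : zr ≤ 1 / 2 := by rw [hzrdef]; linarith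
  have hab : a ≤ b := by
    rw [hadef, hbdef]
    nlinarith
  have hsum : a + b = ℓ := by rw [hadef, hbdef]; ring
  have habs1 : x ≤ ℓ / 2 → |x - a| ≤ |x - b| := by
    intro hx
    rcases abs_cases (x - a) with ⟨e1, e2⟩ | ⟨e1, e2⟩ <;>
      rcases abs_cases (x - b) with ⟨f1, f2⟩ | ⟨f1, f2⟩ <;> rw [e1, f1] <;> linarith
  have habs2 : ℓ / 2 < x → |x - b| ≤ |x - a| := by
    intro hx
    rcases abs_cases (x - a) with ⟨e1, e2⟩ | ⟨e1, e2⟩ <;>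
      rcases abs_cases (x - b) with ⟨f1, f2⟩ | ⟨f1, f2⟩ <;> rw [e1, f1] <;> linarith
  set D : ℝ := |(|x - a| - |x - b|)| with hDdef
  have hD : 0 ≤ D := abs_nonneg _
  have hv1 : t.1 = -1 ∨ t.1 = 0 ∨ t.1 = 1 := hti.1
  have hv2 : t.2 = -1 ∨ t.2 = 0 ∨ t.2 = 1 := hti.2
  set s' : Fin n → ℝ × (ℤ × ℤ) := Function.update s i (x', t') with hs'def
  have hexp : ∀ s0 : Fin n → ℝ × (ℤ × ℤ), randomPlusExp ℓ s0 x t =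
      (if Lev ℓ s0 Prod.fst ∧ Lev ℓ s0 Prod.snd then uj ℓ x t.1 a + uj ℓ x t.2 a
       else if Lev ℓ s0 Prod.fst ∧ Hev ℓ s0 Prod.snd then uj ℓ x t.1 a + uj ℓ x t.2 b
       else if Hev ℓ s0 Prod.fst ∧ Hev ℓ s0 Prod.snd then uj ℓ x t.1 b + uj ℓ x t.2 b
       else if Hev ℓ s0 Prod.fst ∧ Lev ℓ s0 Prod.snd then uj ℓ x t.1 b + uj ℓ x t.2 a
       else (uj ℓ x t.1 a + uj ℓ x t.2 a + (uj ℓ x t.1 b + uj ℓ x t.2 b)) / 2) :=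
    fun s0 => rfl
  rw [hexp s', hexp s]
  have kP1 : Lev ℓ s Prod.fst → uj ℓ x t.1 b ≤ uj ℓ x t.1 a :=
    fun h => coordL ℓ x a b habs1 habs2 t.1 (h i).1 (h i).2
  have kQ1 : Hev ℓ s Prod.fst → uj ℓ x t.1 a ≤ uj ℓ x t.1 b :=
    fun h => coordH ℓ x a b habs1 habs2 t.1 (h i).1 (h i).2
  have kP2 : Lev ℓ s Prod.snd → uj ℓ x t.2 b ≤ uj ℓ x t.2 a :=
    fun h => coordL ℓ x a b habs1 habs2 t.2 (h i).1 (h i).2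
  have kQ2 : Hev ℓ s Prod.snd → uj ℓ x t.2 a ≤ uj ℓ x t.2 b :=
    fun h => coordH ℓ x a b habs1 habs2 t.2 (h i).1 (h i).2
  have kP1' : Lev ℓ s' Prod.fst →
      Lev ℓ s Prod.fst ∨ uj ℓ x t.1 b - uj ℓ x t.1 a = D := by
    intro h
    rcases update_all s i (x', t')
        (fun p => (p.1 ≤ ℓ / 2 → p.2.1 = 0 ∨ p.2.1 = 1) ∧
          (ℓ / 2 < p.1 → p.2.1 = 0 ∨ p.2.1 = -1)) h with h' | h'
    · exact Or.inl h'
    · exact Or.inr (coordNotL ℓ x a b habs1 habs2 t.1 hv1 h')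
  have kQ1' : Hev ℓ s' Prod.fst →
      Hev ℓ s Prod.fst ∨ uj ℓ x t.1 a - uj ℓ x t.1 b = D := by
    intro h
    rcases update_all s i (x', t')
        (fun p => (p.1 ≤ ℓ / 2 → p.2.1 = 0 ∨ p.2.1 = -1) ∧
          (ℓ / 2 < p.1 → p.2.1 = 0 ∨ p.2.1 = 1)) h with h' | h'
    · exact Or.inl h'
    · exact Or.inr (coordNotH ℓ x a b habs1 habs2 t.1 hv1 h')
  have kP2' : Lev ℓ s' Prod.snd →
      Lev ℓ s Prod.snd ∨ uj ℓ x t.2 b - uj ℓ x t.2 a = D := by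
    intro h
    rcases update_all s i (x', t')
        (fun p => (p.1 ≤ ℓ / 2 → p.2.2 = 0 ∨ p.2.2 = 1) ∧
          (ℓ / 2 < p.1 → p.2.2 = 0 ∨ p.2.2 = -1)) h with h' | h'
    · exact Or.inl h'
    · exact Or.inr (coordNotL ℓ x a b habs1 habs2 t.2 hv2 h')
  have kQ2' : Hev ℓ s' Prod.snd →
      Hev ℓ s Prod.snd ∨ uj ℓ x t.2 a - uj ℓ x t.2 b = D := by
    intro h
    rcases update_all s i (x', t')
        (fun p => (p.1 ≤ ℓ / 2 → p.2.2 = 0 ∨ p.2.2 = -1) ∧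
          (ℓ / 2 < p.1 → p.2.2 = 0 ∨ p.2.2 = 1)) h with h' | h'
    · exact Or.inl h'
    · exact Or.inr (coordNotH ℓ x a b habs1 habs2 t.2 hv2 h')
  have km1 := coordBound ℓ x a b t.1 hv1
  have km2 := coordBound ℓ x a b t.2 hv2
  exact keyVP (uj ℓ x t.1 a) (uj ℓ x t.1 b) (uj ℓ x t.2 a) (uj ℓ x t.2 b) D
    (Lev ℓ s Prod.fst) (Hev ℓ s Prod.fst) (Lev ℓ s Prod.snd) (Hev ℓ s Prod.snd)
    (Lev ℓ s' Prod.fst) (Hev ℓ s' Prod.fst) (Lev ℓ s' Prod.snd) (Hev ℓ s' Prod.snd)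
    hD kP1 kQ1 kP2 kQ2 kP1' kQ1' kP2' kQ2' km1.1 km1.2 km2.1 km2.2
end

section
/- The Random⁺ mechanism is (1/2 + z_r)-approximate for the Egalitarian objective, where z_r = (13 − √161)/8: for every profile of n ≥ 1 agents with locations x_i ∈ [0, ℓ] and preferences t_i ∈ {−1,0,1}², the minimum over agents i of the expected utility of agent i under the output distribution of Random⁺ on the truthful profile is at least (1/2 + z_r) · sup_{y∈[0,ℓ]²} min_i u(x_i, t_i, y). -/
lemma uj_reflect (ℓ x w : ℝ) (t : ℤ) : uj ℓ (ℓ - x) t (ℓ - w) = uj ℓ x t w := by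
  unfold uj
  have h : |ℓ - x - (ℓ - w)| = |x - w| := by
    rw [show ℓ - x - (ℓ - w) = -(x - w) by ring, abs_neg]
  split_ifs <;> simp [h, abs_sub_comm]

lemma uj_reflectA (ℓ x c : ℝ) (t : ℤ) : uj ℓ (ℓ - x) t c = uj ℓ x t (ℓ - c) := by
  have := uj_reflect ℓ x (ℓ - c) t
  rwa [show ℓ - (ℓ - c) = c by ring] at this

lemma uj_negE (ℓ x c : ℝ) : uj ℓ x (-1) c = |x - c| := by simp [uj]
lemma uj_zeroE (ℓ x c : ℝ) : uj ℓ x 0 c = ℓ := by norm_num [uj]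
lemma uj_oneE (ℓ x c : ℝ) : uj ℓ x 1 c = ℓ - |x - c| := by norm_num [uj]

lemma uj_nonneg_s12 {ℓ x w : ℝ} (t : ℤ) (hx : 0 ≤ x) (hx' : x ≤ ℓ) (hw : 0 ≤ w) (hw' : w ≤ ℓ) :
    0 ≤ uj ℓ x t w := by
  have : |x - w| ≤ ℓ := abs_le.2 ⟨by linarith, by linarith⟩
  unfold uj; split_ifs
  · positivity
  · linarith
  · linarith

lemma uj_le_s12 {ℓ x w : ℝ} (t : ℤ) (hx : 0 ≤ x) (hx' : x ≤ ℓ) (hw : 0 ≤ w) (hw' : w ≤ ℓ) :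
    uj ℓ x t w ≤ ℓ := by
  have h1 : |x - w| ≤ ℓ := abs_le.2 ⟨by linarith, by linarith⟩
  have h2 : 0 ≤ |x - w| := abs_nonneg _
  unfold uj; split_ifs <;> linarith

lemma sum_abs_ge {z ℓ x : ℝ} : (1-2*z)*ℓ ≤ |x - z*ℓ| + |x - (1-z)*ℓ| := by
  rcases abs_cases (x - z*ℓ) with ⟨e1, e1'⟩ | ⟨e1, e1'⟩ <;>
  rcases abs_cases (x - (1-z)*ℓ) with ⟨e2, e2'⟩ | ⟨e2, e2'⟩ <;> nlinarith

lemma sum_abs_le {z ℓ x : ℝ} (hz1 : 31/800 < z) (hz2 : z < 1/25) (hℓ : 0 < ℓ)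
    (hx : 0 ≤ x) (hx' : x ≤ ℓ) : |x - z*ℓ| + |x - (1-z)*ℓ| ≤ ℓ := by
  rcases abs_cases (x - z*ℓ) with ⟨e1, e1'⟩ | ⟨e1, e1'⟩ <;>
  rcases abs_cases (x - (1-z)*ℓ) with ⟨e2, e2'⟩ | ⟨e2, e2'⟩ <;> nlinarith

lemma pairBound {z ℓ x : ℝ} (hz1 : 31/800 < z) (hz2 : z < 1/25) (hℓ : 0 < ℓ)
    (t : ℤ) (ht : t = -1 ∨ t = 0 ∨ t = 1) (hx : 0 ≤ x) (hx' : x ≤ ℓ) :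
    (1-2*z)*ℓ ≤ uj ℓ x t (z*ℓ) + uj ℓ x t ((1-z)*ℓ) := by
  have hg := sum_abs_ge (z := z) (ℓ := ℓ) (x := x)
  have hl := sum_abs_le hz1 hz2 hℓ hx hx'
  rcases ht with rfl | rfl | rfl <;>
    simp only [uj_negE, uj_zeroE, uj_oneE] <;> nlinarith

set_option maxHeartbeats 2000000 in
lemma mixedCore {z ℓ x w yo xp xq V : ℝ} {t1 t2 sp sq : ℤ}
    (hz1 : 31/800 < z) (hz2 : z < 1/25) (hzq : 8*z^2 - 26*z + 1 = 0) (hℓ : 0 < ℓ)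
    (hx : 0 ≤ x) (hx2 : x ≤ ℓ/2)
    (ht1 : t1 = -1 ∨ t1 = 0 ∨ t1 = 1) (ht2 : t2 = -1 ∨ t2 = 0 ∨ t2 = 1)
    (hw : 0 ≤ w) (hw' : w ≤ ℓ) (hyo : 0 ≤ yo) (hyo' : yo ≤ ℓ)
    (hxp : 0 ≤ xp) (hxp' : xp ≤ ℓ) (hxq : 0 ≤ xq) (hxq' : xq ≤ ℓ)
    (hp : (xp ≤ ℓ/2 ∧ sp = -1) ∨ (ℓ/2 ≤ xp ∧ sp = 1))
    (hq : (xq ≤ ℓ/2 ∧ sq = 1) ∨ (ℓ/2 ≤ xq ∧ sq = -1))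
    (hVi : V ≤ uj ℓ x t1 w + uj ℓ x t2 yo)
    (hVp : V ≤ uj ℓ xp sp w + ℓ)
    (hVq : V ≤ uj ℓ xq sq w + ℓ) :
    (1/2 + z) * V ≤
      (uj ℓ x t1 (z*ℓ) + uj ℓ x t1 ((1-z)*ℓ) + uj ℓ x t2 (z*ℓ) + uj ℓ x t2 ((1-z)*ℓ)) / 2 := by
  have hz0 : (0:ℝ) < z := by linarith
  have hr0 : (0:ℝ) < 1/2 + z := by linarith
  have hzl : z*ℓ ≤ ℓ/25 := by nlinarith
  have hzl0 : 0 < z*ℓ := mul_pos hz0 hℓ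
  have hx' : x ≤ ℓ := by linarith
  have haxw : |x - w| ≤ ℓ := abs_le.2 ⟨by linarith, by linarith⟩
  have haxw0 : 0 ≤ |x - w| := abs_nonneg _
  have hub1 : uj ℓ x t1 w ≤ ℓ := uj_le_s12 t1 hx hx' hw hw'
  have hub2 : uj ℓ x t2 yo ≤ ℓ := uj_le_s12 t2 hx hx' hyo hyo'
  have hlb2 : 0 ≤ uj ℓ x t2 yo := uj_nonneg_s12 t2 hx hx' hyo hyo'
  have hV2 : V ≤ 2*ℓ := by linarith
  have hcap : |x - yo| ≤ ℓ - x := abs_le.2 ⟨by linarith, by linarith⟩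
  have hE2 := mul_le_mul_of_nonneg_left hV2 hr0.le
  rcases ht1 with rfl | rfl | rfl
  · -- t1 = -1
    rw [uj_negE] at hVi
    rcases ht2 with rfl | rfl | rfl
    · -- (-1, -1)
      simp only [uj_negE] at hVi ⊢
      have hVi' : V ≤ |x - w| + (ℓ - x) := by linarith
      rcases hq with ⟨hq1, rfl⟩ | ⟨hq1, rfl⟩
      · -- q low, wants near
        rw [uj_oneE] at hVq
        have hC : V ≤ 7/4*ℓ - x := by
          rcases le_or_gt (|x - w|) (3/4*ℓ) with h | h
          · linarith
          · have hw1 : 3/4*ℓ < w - x := by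
              rcases abs_cases (x - w) with ⟨e, e'⟩ | ⟨e, e'⟩ <;> linarith
            have haq : |xq - w| = w - xq := by
              rw [abs_sub_comm]; exact abs_of_nonneg (by linarith)
            rw [haq] at hVq; linarith
        have e1 := mul_le_mul_of_nonneg_left hC hr0.le
        have e3 : 8*z^2*ℓ - 26*z*ℓ + ℓ = 0 := by linear_combination ℓ * hzq
        rcases le_or_gt x (z*ℓ) with hxa | hxa
        · have p1 : |x - z*ℓ| = z*ℓ - x := by
            rw [abs_sub_comm]; exact abs_of_nonneg (by linarith)
          have p2 : |x - (1-z)*ℓ| = (1-z)*ℓ - x := by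
            rw [abs_sub_comm]; exact abs_of_nonneg (by linarith [hzl])
          rw [p1, p2]
          have e2 : (0:ℝ) ≤ (z*ℓ - x)*(3/2 - z) := mul_nonneg (by linarith) (by linarith)
          linarith [e1, e2, e3]
        · have p1 : |x - z*ℓ| = x - z*ℓ := abs_of_nonneg (by linarith)
          have p2 : |x - (1-z)*ℓ| = (1-z)*ℓ - x := by
            rw [abs_sub_comm]; exact abs_of_nonneg (by linarith [hzl])
          rw [p1, p2]
          have e2 : (0:ℝ) ≤ (x - z*ℓ)*(1/2 + z) := mul_nonneg (by linarith) (by linarith)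
          linarith [e1, e2, e3]
      · -- q high, wants far
        rw [uj_negE] at hVq
        have hC : V ≤ 3/2*ℓ := by
          rcases le_or_gt w (ℓ/2) with h | h
          · have : |x - w| ≤ ℓ/2 := abs_le.2 ⟨by linarith, by linarith⟩
            linarith
          · have : |xq - w| ≤ ℓ/2 := abs_le.2 ⟨by linarith, by linarith⟩
            linarith
        have e1 := mul_le_mul_of_nonneg_left hC hr0.le
        have hg := sum_abs_ge (z := z) (ℓ := ℓ) (x := x)
        linarith [e1, hg, hzl]
    · -- (-1, 0)
      simp only [uj_negE, uj_zeroE] at hVi ⊢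
      have hg := sum_abs_ge (z := z) (ℓ := ℓ) (x := x)
      linarith [hE2, hg, hzl]
    · -- (-1, 1)
      simp only [uj_negE, uj_oneE] at hVi ⊢
      have hVi' : V ≤ |x - w| + ℓ := by linarith [abs_nonneg (x - yo)]
      rcases hq with ⟨hq1, rfl⟩ | ⟨hq1, rfl⟩
      · rw [uj_oneE] at hVq
        by_cases hc : (1/2+z)*(|x - w| + ℓ) ≤ ℓ
        · have e1 := mul_le_mul_of_nonneg_left hVi' hr0.le
          linarith
        · push_neg at hc
          rcases abs_cases (x - w) with ⟨e, e'⟩ | ⟨e, e'⟩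
          · exfalso
            linarith [mul_le_mul_of_nonneg_left
              (show |x - w| + ℓ ≤ 3/2*ℓ by linarith) hr0.le, hzl, hc]
          · rcases le_or_gt xq w with hqw | hqw
            · have haq : |xq - w| = w - xq := by
                rw [abs_sub_comm]; exact abs_of_nonneg (by linarith)
              rw [haq] at hVq
              rw [e] at hc
              have e1 := mul_le_mul_of_nonneg_left hVq hr0.le
              linarith [e1, hc, mul_le_mul_of_nonneg_left hq1 hr0.le,
                mul_nonneg hr0.le hx, hzl]
            · exfalso
              linarith [mul_le_mul_of_nonneg_left
                (show |x - w| + ℓ ≤ 3/2*ℓ by linarith) hr0.le, hzl, hc]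
      · rw [uj_negE] at hVq
        have hC : V ≤ 3/2*ℓ := by
          rcases le_or_gt w (ℓ/2) with h | h
          · have : |x - w| ≤ ℓ/2 := abs_le.2 ⟨by linarith, by linarith⟩
            linarith
          · have : |xq - w| ≤ ℓ/2 := abs_le.2 ⟨by linarith, by linarith⟩
            linarith
        have e1 := mul_le_mul_of_nonneg_left hC hr0.le
        linarith [e1, hzl]
  · -- t1 = 0
    simp only [uj_zeroE] at hVi ⊢
    have h2 := pairBound hz1 hz2 hℓ t2 ht2 hx hx'
    linarith [hE2, h2, hzl]
  · -- t1 = 1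
    rw [uj_oneE] at hVi
    rcases ht2 with rfl | rfl | rfl
    · -- (1, -1)
      simp only [uj_negE, uj_oneE] at hVi ⊢
      have hVi' : V ≤ 2*ℓ - x - |x - w| := by linarith
      rcases hp with ⟨hp1, rfl⟩ | ⟨hp1, rfl⟩
      · rw [uj_negE] at hVp
        by_cases hc : (1/2+z)*(2*ℓ - x - |x - w|) ≤ ℓ
        · have e1 := mul_le_mul_of_nonneg_left hVi' hr0.le
          linarith
        · push_neg at hc
          rcases le_or_gt w xp with hwp | hwp
          · have ha : |xp - w| = xp - w := abs_of_nonneg (by linarith)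
            rw [ha] at hVp
            have e1 := mul_le_mul_of_nonneg_left hVp hr0.le
            linarith [e1, mul_le_mul_of_nonneg_left
              (show xp - w ≤ ℓ/2 by linarith) hr0.le, hzl]
          · have ha : |xp - w| = w - xp := by
              rw [abs_sub_comm]; exact abs_of_nonneg (by linarith)
            rw [ha] at hVp
            have htr : w - x ≤ |x - w| := by
              rw [abs_sub_comm]; exact le_abs_self _
            have e1 := mul_le_mul_of_nonneg_left hVp hr0.le
            have e2 := mul_le_mul_of_nonneg_left
              (show w - xp ≤ x + |x - w| - xp by linarith) hr0.le
            linarith [e1, e2, hc, mul_nonneg hr0.le hxp, hzl]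
      · rw [uj_oneE] at hVp
        have htr : xp - x ≤ |x - w| + |xp - w| := by
          have h1 : |xp - x| ≤ |xp - w| + |w - x| := abs_sub_le xp w x
          have h2 : xp - x ≤ |xp - x| := le_abs_self _
          rw [abs_sub_comm w x] at h1; linarith
        have hC : V ≤ 7/4*ℓ := by linarith
        have e1 := mul_le_mul_of_nonneg_left hC hr0.le
        linarith [e1, hzl]
    · -- (1, 0)
      simp only [uj_oneE, uj_zeroE] at hVi ⊢
      have hl := sum_abs_le hz1 hz2 hℓ hx hx'
      linarith [hE2, hl, hzl]
    · -- (1, 1)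
      simp only [uj_oneE] at hVi ⊢
      have hVi' : V ≤ 2*ℓ - |x - w| := by linarith [abs_nonneg (x - yo)]
      rcases le_or_gt (z*ℓ) x with hxa | hxa
      · have p1 : |x - z*ℓ| = x - z*ℓ := abs_of_nonneg (by linarith)
        have p2 : |x - (1-z)*ℓ| = (1-z)*ℓ - x := by
          rw [abs_sub_comm]; exact abs_of_nonneg (by linarith [hzl])
        rw [p1, p2]
        linarith [hE2]
      · have p1 : |x - z*ℓ| = z*ℓ - x := by
          rw [abs_sub_comm]; exact abs_of_nonneg (by linarith)
        have p2 : |x - (1-z)*ℓ| = (1-z)*ℓ - x := by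
          rw [abs_sub_comm]; exact abs_of_nonneg (by linarith [hzl])
        rw [p1, p2]
        rcases hp with ⟨hp1, rfl⟩ | ⟨hp1, rfl⟩
        · rw [uj_negE] at hVp
          by_cases hc : (1/2+z)*(2*ℓ - |x - w|) ≤ ℓ + 2*x
          · have e1 := mul_le_mul_of_nonneg_left hVi' hr0.le
            linarith
          · push_neg at hc
            rcases le_or_gt w xp with hwp | hwp
            · have ha : |xp - w| = xp - w := abs_of_nonneg (by linarith)
              rw [ha] at hVp
              linarith [mul_le_mul_of_nonneg_left hVp hr0.le,
                mul_le_mul_of_nonneg_left (show xp - w ≤ ℓ/2 by linarith) hr0.le, hzl, hx]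
            · have ha : |xp - w| = w - xp := by
                rw [abs_sub_comm]; exact abs_of_nonneg (by linarith)
              rw [ha] at hVp
              have htr : w - x ≤ |x - w| := by
                rw [abs_sub_comm]; exact le_abs_self _
              have e2 := mul_le_mul_of_nonneg_left
                (show w - xp ≤ x + |x - w| - xp by linarith) hr0.le
              linarith [mul_le_mul_of_nonneg_left hVp hr0.le, e2, hc,
                mul_nonneg hr0.le hxp, hzl, hx,
                mul_le_mul_of_nonneg_right hz2.le hx]
        · rw [uj_oneE] at hVp
          have htr : xp - x ≤ |x - w| + |xp - w| := by
            have h1 : |xp - x| ≤ |xp - w| + |w - x| := abs_sub_le xp w x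
            have h2 : xp - x ≤ |xp - x| := le_abs_self _
            rw [abs_sub_comm w x] at h1; linarith
          have hC : V ≤ 7/4*ℓ + x/2 := by linarith
          linarith [mul_le_mul_of_nonneg_left hC hr0.le, hzl, hx,
            mul_le_mul_of_nonneg_right hz2.le hx]



lemma mixedCore2 {z ℓ x w yo xp xq V : ℝ} {t1 t2 sp sq : ℤ}
    (hz1 : 31/800 < z) (hz2 : z < 1/25) (hzq : 8*z^2 - 26*z + 1 = 0) (hℓ : 0 < ℓ)
    (hx : 0 ≤ x) (hx' : x ≤ ℓ)
    (ht1 : t1 = -1 ∨ t1 = 0 ∨ t1 = 1) (ht2 : t2 = -1 ∨ t2 = 0 ∨ t2 = 1)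
    (hw : 0 ≤ w) (hw' : w ≤ ℓ) (hyo : 0 ≤ yo) (hyo' : yo ≤ ℓ)
    (hxp : 0 ≤ xp) (hxp' : xp ≤ ℓ) (hxq : 0 ≤ xq) (hxq' : xq ≤ ℓ)
    (hp : (xp ≤ ℓ/2 ∧ sp = -1) ∨ (ℓ/2 ≤ xp ∧ sp = 1))
    (hq : (xq ≤ ℓ/2 ∧ sq = 1) ∨ (ℓ/2 ≤ xq ∧ sq = -1))
    (hVi : V ≤ uj ℓ x t1 w + uj ℓ x t2 yo)
    (hVp : V ≤ uj ℓ xp sp w + ℓ)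
    (hVq : V ≤ uj ℓ xq sq w + ℓ) :
    (1/2 + z) * V ≤
      (uj ℓ x t1 (z*ℓ) + uj ℓ x t1 ((1-z)*ℓ) + uj ℓ x t2 (z*ℓ) + uj ℓ x t2 ((1-z)*ℓ)) / 2 := by
  rcases le_or_gt x (ℓ/2) with hx2 | hx2
  · exact mixedCore hz1 hz2 hzq hℓ hx hx2 ht1 ht2 hw hw' hyo hyo' hxp hxp' hxq hxq'
      hp hq hVi hVp hVq
  · have h := mixedCore (z := z) (ℓ := ℓ) (x := ℓ - x) (w := ℓ - w) (yo := ℓ - yo)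
      (xp := ℓ - xq) (xq := ℓ - xp) (sp := sq) (sq := sp) (t1 := t1) (t2 := t2) (V := V)
      hz1 hz2 hzq hℓ (by linarith) (by linarith) ht1 ht2 (by linarith) (by linarith)
      (by linarith) (by linarith) (by linarith) (by linarith) (by linarith) (by linarith)
      (by rcases hq with ⟨h1, h2⟩ | ⟨h1, h2⟩
          · exact Or.inr ⟨by linarith, h2⟩
          · exact Or.inl ⟨by linarith, h2⟩)
      (by rcases hp with ⟨h1, h2⟩ | ⟨h1, h2⟩
          · exact Or.inr ⟨by linarith, h2⟩
          · exact Or.inl ⟨by linarith, h2⟩)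
      (by rw [uj_reflect, uj_reflect]; exact hVi)
      (by rw [uj_reflect]; exact hVq)
      (by rw [uj_reflect]; exact hVp)
    rw [uj_reflectA, uj_reflectA, uj_reflectA, uj_reflectA,
        show ℓ - z*ℓ = (1-z)*ℓ by ring, show ℓ - (1-z)*ℓ = z*ℓ by ring] at h
    linarith [h]

lemma coordL_s12 {z ℓ x w : ℝ} (hz1 : 31/800 < z) (hz2 : z < 1/25) (hℓ : 0 < ℓ) (t : ℤ)
    (hx : 0 ≤ x) (hx' : x ≤ ℓ) (hw : 0 ≤ w) (hw' : w ≤ ℓ)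
    (hc : (x ≤ ℓ/2 ∧ (t = 0 ∨ t = 1)) ∨ (ℓ/2 ≤ x ∧ (t = 0 ∨ t = -1))) :
    (1/2 + z) * uj ℓ x t w ≤ uj ℓ x t (z*ℓ) := by
  have hz0 : (0:ℝ) < z := by linarith
  have hzl : z*ℓ ≤ ℓ/25 := by nlinarith
  have hzl0 : 0 < z*ℓ := mul_pos hz0 hℓ
  have habs : |x - w| ≤ ℓ := abs_le.2 ⟨by linarith, by linarith⟩
  have habs0 : 0 ≤ |x - w| := abs_nonneg _
  rcases hc with ⟨hx2, ht⟩ | ⟨hx2, ht⟩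
  · rcases ht with rfl | rfl
    · simp only [uj_zeroE]; linarith [hzl0]
    · simp only [uj_oneE]
      have h1 : |x - z*ℓ| ≤ 1/2*ℓ - z*ℓ := abs_le.2 ⟨by linarith, by linarith⟩
      linarith [mul_nonneg (show (0:ℝ) ≤ 1/2 + z by linarith) habs0, hzl]
  · rcases ht with rfl | rfl
    · simp only [uj_zeroE]; linarith [hzl0]
    · simp only [uj_negE]
      have h1 : |x - z*ℓ| = x - z*ℓ := abs_of_nonneg (by linarith)
      have h2 : |x - w| ≤ x := abs_le.2 ⟨by linarith, by linarith⟩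
      rw [h1]
      linarith [mul_le_mul_of_nonneg_left h2 (show (0:ℝ) ≤ 1/2 + z by linarith),
        mul_le_mul_of_nonneg_left hx2 (show (0:ℝ) ≤ 1/2 - z by linarith), hzl]

lemma coordH_s12 {z ℓ x w : ℝ} (hz1 : 31/800 < z) (hz2 : z < 1/25) (hℓ : 0 < ℓ) (t : ℤ)
    (hx : 0 ≤ x) (hx' : x ≤ ℓ) (hw : 0 ≤ w) (hw' : w ≤ ℓ)
    (hc : (x ≤ ℓ/2 ∧ (t = 0 ∨ t = -1)) ∨ (ℓ/2 ≤ x ∧ (t = 0 ∨ t = 1))) :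
    (1/2 + z) * uj ℓ x t w ≤ uj ℓ x t ((1-z)*ℓ) := by
  have h := coordL_s12 (z := z) (ℓ := ℓ) (x := ℓ - x) (w := ℓ - w) hz1 hz2 hℓ t
    (by linarith) (by linarith) (by linarith) (by linarith) ?_
  · rw [uj_reflect, uj_reflectA, show ℓ - z*ℓ = (1-z)*ℓ by ring] at h
    exact h
  · rcases hc with ⟨hx2, ht⟩ | ⟨hx2, ht⟩
    · exact Or.inr ⟨by linarith, ht⟩
    · exact Or.inl ⟨by linarith, ht⟩

lemma evAt {ℓ x : ℝ} {P Q : Prop} (h1 : x ≤ ℓ/2 → P) (h2 : ℓ/2 < x → Q) :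
    (x ≤ ℓ/2 ∧ P) ∨ (ℓ/2 ≤ x ∧ Q) := by
  rcases le_or_gt x (ℓ/2) with h | h
  · exact Or.inl ⟨h, h1 h⟩
  · exact Or.inr ⟨h.le, h2 h⟩

lemma notLev_witness {ℓ : ℝ} {n : ℕ} {s : Fin n → ℝ × (ℤ × ℤ)} {pj : ℤ × ℤ → ℤ}
    (hval : ∀ k, pj (s k).2 = -1 ∨ pj (s k).2 = 0 ∨ pj (s k).2 = 1)
    (h : ¬ Lev ℓ s pj) :
    ∃ p, ((s p).1 ≤ ℓ/2 ∧ pj (s p).2 = -1) ∨ (ℓ/2 ≤ (s p).1 ∧ pj (s p).2 = 1) := by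
  obtain ⟨p, hp⟩ := not_forall.1 h
  refine ⟨p, ?_⟩
  rcases le_or_gt (s p).1 (ℓ/2) with hx | hx
  · left
    refine ⟨hx, ?_⟩
    by_contra hne
    refine hp ⟨fun _ => ?_, fun hgt => absurd hgt (not_lt.2 hx)⟩
    rcases hval p with h1 | h1 | h1
    · exact (hne h1).elim
    · exact Or.inl h1
    · exact Or.inr h1
  · right
    refine ⟨hx.le, ?_⟩
    by_contra hne
    refine hp ⟨fun hle => absurd hx (not_lt.2 hle), fun _ => ?_⟩
    rcases hval p with h1 | h1 | h1
    · exact Or.inr h1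
    · exact Or.inl h1
    · exact (hne h1).elim

lemma notHev_witness {ℓ : ℝ} {n : ℕ} {s : Fin n → ℝ × (ℤ × ℤ)} {pj : ℤ × ℤ → ℤ}
    (hval : ∀ k, pj (s k).2 = -1 ∨ pj (s k).2 = 0 ∨ pj (s k).2 = 1)
    (h : ¬ Hev ℓ s pj) :
    ∃ q, ((s q).1 ≤ ℓ/2 ∧ pj (s q).2 = 1) ∨ (ℓ/2 ≤ (s q).1 ∧ pj (s q).2 = -1) := by
  obtain ⟨q, hq⟩ := not_forall.1 h
  refine ⟨q, ?_⟩
  rcases le_or_gt (s q).1 (ℓ/2) with hx | hx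
  · left
    refine ⟨hx, ?_⟩
    by_contra hne
    refine hq ⟨fun _ => ?_, fun hgt => absurd hgt (not_lt.2 hx)⟩
    rcases hval q with h1 | h1 | h1
    · exact Or.inr h1
    · exact Or.inl h1
    · exact (hne h1).elim
  · right
    refine ⟨hx.le, ?_⟩
    by_contra hne
    refine hq ⟨fun hle => absurd hx (not_lt.2 hle), fun _ => ?_⟩
    rcases hval q with h1 | h1 | h1
    · exact (hne h1).elim
    · exact Or.inl h1
    · exact Or.inr h1

lemma zr_facts : 31/800 < (13 - Real.sqrt 161)/8 ∧ (13 - Real.sqrt 161)/8 < 1/25 ∧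
    8*((13 - Real.sqrt 161)/8)^2 - 26*((13 - Real.sqrt 161)/8) + 1 = 0 := by
  have h : Real.sqrt 161 ^ 2 = 161 := Real.sq_sqrt (by norm_num)
  have h0 : 0 ≤ Real.sqrt 161 := Real.sqrt_nonneg _
  exact ⟨by nlinarith, by nlinarith, by linear_combination h/8⟩

lemma rexp_nonneg {ℓ : ℝ} {n : ℕ} (s : Fin n → ℝ × (ℤ × ℤ)) {x : ℝ} (t : ℤ × ℤ)
    (hℓ : 0 < ℓ) (hx : 0 ≤ x) (hx' : x ≤ ℓ) : 0 ≤ randomPlusExp ℓ s x t := by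
  obtain ⟨hz1, hz2, -⟩ := zr_facts
  have b1 : 0 ≤ (13 - Real.sqrt 161)/8 * ℓ := by nlinarith
  have b2 : (13 - Real.sqrt 161)/8 * ℓ ≤ ℓ := by nlinarith
  have b3 : 0 ≤ (1 - (13 - Real.sqrt 161)/8) * ℓ := by nlinarith
  have b4 : (1 - (13 - Real.sqrt 161)/8) * ℓ ≤ ℓ := by nlinarith
  unfold randomPlusExp
  split_ifs <;> unfold u2 <;>
    [ exact add_nonneg (uj_nonneg_s12 _ hx hx' b1 b2) (uj_nonneg_s12 _ hx hx' b1 b2);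
      exact add_nonneg (uj_nonneg_s12 _ hx hx' b1 b2) (uj_nonneg_s12 _ hx hx' b3 b4);
      exact add_nonneg (uj_nonneg_s12 _ hx hx' b3 b4) (uj_nonneg_s12 _ hx hx' b3 b4);
      exact add_nonneg (uj_nonneg_s12 _ hx hx' b3 b4) (uj_nonneg_s12 _ hx hx' b1 b2);
      exact div_nonneg (add_nonneg
        (add_nonneg (uj_nonneg_s12 _ hx hx' b1 b2) (uj_nonneg_s12 _ hx hx' b1 b2))
        (add_nonneg (uj_nonneg_s12 _ hx hx' b3 b4) (uj_nonneg_s12 _ hx hx' b3 b4))) (by norm_num) ]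



/-- `Random⁺` is `(1/2 + z_r)`-approximate in expectation for the
Egalitarian objective, where `z_r = (13 - √161)/8`. -/
theorem randomPlus_egalitarian_approx
    (ℓ : ℝ) (hℓ : 0 < ℓ) (n : ℕ) (hn : 0 < n)
    (s : Fin n → ℝ × (ℤ × ℤ))
    (hs : ∀ j, (s j).1 ∈ Set.Icc 0 ℓ ∧ (s j).2 ∈ validPref) :
    (1/2 + (13 - Real.sqrt 161) / 8) *
        (⨆ y ∈ box ℓ, ⨅ i, u2 ℓ (s i).1 (s i).2 y) ≤
      ⨅ i, randomPlusExp ℓ s (s i).1 (s i).2 := by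
  have hne : Nonempty (Fin n) := ⟨⟨0, hn⟩⟩
  obtain ⟨hz1, hz2, hzq⟩ := zr_facts
  have hz0 : (0:ℝ) < (13 - Real.sqrt 161)/8 := by linarith
  have hr0 : (0:ℝ) < 1/2 + (13 - Real.sqrt 161)/8 := by linarith
  have key : ∀ (i : Fin n) (y : ℝ × ℝ), y ∈ box ℓ →
      (1/2 + (13 - Real.sqrt 161)/8) * (⨅ k, u2 ℓ (s k).1 (s k).2 y) ≤
        randomPlusExp ℓ s (s i).1 (s i).2 := by
    intro i y hy
    obtain ⟨hy1, hy1'⟩ : y.1 ∈ Set.Icc 0 ℓ := hy.1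
    obtain ⟨hy2, hy2'⟩ : y.2 ∈ Set.Icc 0 ℓ := hy.2
    have hbdd : BddBelow (Set.range fun k => u2 ℓ (s k).1 (s k).2 y) := by
      refine ⟨0, ?_⟩
      rintro v ⟨k, rfl⟩
      exact add_nonneg (uj_nonneg_s12 _ (hs k).1.1 (hs k).1.2 hy1 hy1')
                       (uj_nonneg_s12 _ (hs k).1.1 (hs k).1.2 hy2 hy2')
    set V := ⨅ k, u2 ℓ (s k).1 (s k).2 y with hVdef
    have hVk : ∀ k, V ≤ u2 ℓ (s k).1 (s k).2 y := fun k => ciInf_le hbdd k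
    have hval1 : ∀ k, (s k).2.1 = -1 ∨ (s k).2.1 = 0 ∨ (s k).2.1 = 1 := fun k => (hs k).2.1
    have hval2 : ∀ k, (s k).2.2 = -1 ∨ (s k).2.2 = 0 ∨ (s k).2.2 = 1 := fun k => (hs k).2.2
    unfold randomPlusExp
    split_ifs with hb1 hb2 hb3 hb4
    · obtain ⟨hLa, hLb⟩ := hb1
      have c1 := coordL_s12 hz1 hz2 hℓ (s i).2.1 (hs i).1.1 (hs i).1.2 hy1 hy1'
        (evAt (hLa i).1 (hLa i).2)
      have c2 := coordL_s12 hz1 hz2 hℓ (s i).2.2 (hs i).1.1 (hs i).1.2 hy2 hy2'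
        (evAt (hLb i).1 (hLb i).2)
      have e := mul_le_mul_of_nonneg_left (hVk i) hr0.le
      unfold u2 at e ⊢
      linarith [c1, c2, e]
    · obtain ⟨hLa, hHb⟩ := hb2
      have c1 := coordL_s12 hz1 hz2 hℓ (s i).2.1 (hs i).1.1 (hs i).1.2 hy1 hy1'
        (evAt (hLa i).1 (hLa i).2)
      have c2 := coordH_s12 hz1 hz2 hℓ (s i).2.2 (hs i).1.1 (hs i).1.2 hy2 hy2'
        (evAt (hHb i).1 (hHb i).2)
      have e := mul_le_mul_of_nonneg_left (hVk i) hr0.le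
      unfold u2 at e ⊢
      linarith [c1, c2, e]
    · obtain ⟨hHa, hHb⟩ := hb3
      have c1 := coordH_s12 hz1 hz2 hℓ (s i).2.1 (hs i).1.1 (hs i).1.2 hy1 hy1'
        (evAt (hHa i).1 (hHa i).2)
      have c2 := coordH_s12 hz1 hz2 hℓ (s i).2.2 (hs i).1.1 (hs i).1.2 hy2 hy2'
        (evAt (hHb i).1 (hHb i).2)
      have e := mul_le_mul_of_nonneg_left (hVk i) hr0.le
      unfold u2 at e ⊢
      linarith [c1, c2, e]
    · obtain ⟨hHa, hLb⟩ := hb4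
      have c1 := coordH_s12 hz1 hz2 hℓ (s i).2.1 (hs i).1.1 (hs i).1.2 hy1 hy1'
        (evAt (hHa i).1 (hHa i).2)
      have c2 := coordL_s12 hz1 hz2 hℓ (s i).2.2 (hs i).1.1 (hs i).1.2 hy2 hy2'
        (evAt (hLb i).1 (hLb i).2)
      have e := mul_le_mul_of_nonneg_left (hVk i) hr0.le
      unfold u2 at e ⊢
      linarith [c1, c2, e]
    · have hconf : (¬ Lev ℓ s Prod.fst ∧ ¬ Hev ℓ s Prod.fst) ∨
          (¬ Lev ℓ s Prod.snd ∧ ¬ Hev ℓ s Prod.snd) := by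
        by_cases hL : Lev ℓ s Prod.fst
        · exact Or.inr ⟨fun h => hb1 ⟨hL, h⟩, fun h => hb2 ⟨hL, h⟩⟩
        · by_cases hH : Hev ℓ s Prod.fst
          · exact Or.inr ⟨fun h => hb4 ⟨hH, h⟩, fun h => hb3 ⟨hH, h⟩⟩
          · exact Or.inl ⟨hL, hH⟩
      unfold u2
      rcases hconf with ⟨hnL, hnH⟩ | ⟨hnL, hnH⟩
      · obtain ⟨p, hp⟩ := notLev_witness hval1 hnL
        obtain ⟨q, hq⟩ := notHev_witness hval1 hnH
        have hVp : V ≤ uj ℓ (s p).1 (s p).2.1 y.1 + ℓ := by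
          have h1 := hVk p
          have h2 := uj_le_s12 (s p).2.2 (hs p).1.1 (hs p).1.2 hy2 hy2'
          unfold u2 at h1; linarith
        have hVq : V ≤ uj ℓ (s q).1 (s q).2.1 y.1 + ℓ := by
          have h1 := hVk q
          have h2 := uj_le_s12 (s q).2.2 (hs q).1.1 (hs q).1.2 hy2 hy2'
          unfold u2 at h1; linarith
        have hVi : V ≤ uj ℓ (s i).1 (s i).2.1 y.1 + uj ℓ (s i).1 (s i).2.2 y.2 := by
          have h1 := hVk i; unfold u2 at h1; exact h1
        have h := mixedCore2 hz1 hz2 hzq hℓ (hs i).1.1 (hs i).1.2 (hval1 i) (hval2 i)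
          hy1 hy1' hy2 hy2' (hs p).1.1 (hs p).1.2 (hs q).1.1 (hs q).1.2 hp hq hVi hVp hVq
        linarith [h]
      · obtain ⟨p, hp⟩ := notLev_witness hval2 hnL
        obtain ⟨q, hq⟩ := notHev_witness hval2 hnH
        have hVp : V ≤ uj ℓ (s p).1 (s p).2.2 y.2 + ℓ := by
          have h1 := hVk p
          have h2 := uj_le_s12 (s p).2.1 (hs p).1.1 (hs p).1.2 hy1 hy1'
          unfold u2 at h1; linarith
        have hVq : V ≤ uj ℓ (s q).1 (s q).2.2 y.2 + ℓ := by
          have h1 := hVk q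
          have h2 := uj_le_s12 (s q).2.1 (hs q).1.1 (hs q).1.2 hy1 hy1'
          unfold u2 at h1; linarith
        have hVi : V ≤ uj ℓ (s i).1 (s i).2.2 y.2 + uj ℓ (s i).1 (s i).2.1 y.1 := by
          have h1 := hVk i; unfold u2 at h1; linarith
        have h := mixedCore2 hz1 hz2 hzq hℓ (hs i).1.1 (hs i).1.2 (hval2 i) (hval1 i)
          hy2 hy2' hy1 hy1' (hs p).1.1 (hs p).1.2 (hs q).1.1 (hs q).1.2 hp hq hVi hVp hVq
        linarith [h]
  refine le_ciInf fun i => ?_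
  rw [← le_div_iff₀' hr0]
  have hnn : 0 ≤ randomPlusExp ℓ s (s i).1 (s i).2 / (1/2 + (13 - Real.sqrt 161)/8) :=
    div_nonneg (rexp_nonneg s (s i).2 hℓ (hs i).1.1 (hs i).1.2) hr0.le
  refine Real.iSup_le (fun y => Real.iSup_le (fun hy => ?_) hnn) hnn
  rw [le_div_iff₀' hr0]
  exact key i y hy
end

section
/- There is no optimal deterministic strategy-proof mechanism for 2-facility games even on two-preference instances with three agents at known locations: for ℓ > 0, consider three agents with publicly known locations 0, ℓ/2, and ℓ whose preference vectors lie in {0,1}². There is no function M : ({0,1}²)³ → [0,ℓ]² such that (i) for every declared preference profile t, M(t) maximizes the Egalitarian value min_i u(x_i, t_i, y) over y ∈ [0,ℓ]², and (ii) M is strategy-proof with respect to misreports of preferences, i.e., for every agent i, every profile t, and every misreport t_i′ ∈ {0,1}², the true utility of agent i at M(t) is at least his true utility at the output of M on the profile with t_i replaced by t_i′. -/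
/-- Preference vectors with both coordinates in `{0, 1}`. -/
def valid01 : Set (ℤ × ℤ) := {p | (p.1 = 0 ∨ p.1 = 1) ∧ (p.2 = 0 ∨ p.2 = 1)}

/-- there is no optimal deterministic strategy-proof mechanism for
2-facility games, even on two-preference (`{0,1}²`) instances with three agents
at the known locations `0`, `ℓ/2`, `ℓ`. -/
theorem no_optimal_deterministic_sp_three_agents (ℓ : ℝ) (hℓ : 0 < ℓ) :
    ¬ ∃ M : (ℤ × ℤ) → (ℤ × ℤ) → (ℤ × ℤ) → ℝ × ℝ,
      (∀ t1 ∈ valid01, ∀ t2 ∈ valid01, ∀ t3 ∈ valid01,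
        M t1 t2 t3 ∈ box ℓ ∧
        ∀ y ∈ box ℓ,
          min (min (u2 ℓ 0 t1 y) (u2 ℓ (ℓ/2) t2 y)) (u2 ℓ ℓ t3 y) ≤
          min (min (u2 ℓ 0 t1 (M t1 t2 t3)) (u2 ℓ (ℓ/2) t2 (M t1 t2 t3)))
              (u2 ℓ ℓ t3 (M t1 t2 t3))) ∧
      (∀ t1 ∈ valid01, ∀ t2 ∈ valid01, ∀ t3 ∈ valid01,
        (∀ t1' ∈ valid01, u2 ℓ 0 t1 (M t1' t2 t3) ≤ u2 ℓ 0 t1 (M t1 t2 t3)) ∧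
        (∀ t2' ∈ valid01, u2 ℓ (ℓ/2) t2 (M t1 t2' t3) ≤ u2 ℓ (ℓ/2) t2 (M t1 t2 t3)) ∧
        (∀ t3' ∈ valid01, u2 ℓ ℓ t3 (M t1 t2 t3') ≤ u2 ℓ ℓ t3 (M t1 t2 t3))) := by
  rintro ⟨M, hopt, hsp⟩
  have h10 : ((1 : ℤ), (0 : ℤ)) ∈ valid01 := by simp [valid01]
  have h11 : ((1 : ℤ), (1 : ℤ)) ∈ valid01 := by simp [valid01]
  have h01 : ((0 : ℤ), (1 : ℤ)) ∈ valid01 := by simp [valid01]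
  obtain ⟨hAbox, hAopt⟩ := hopt (1, 0) h10 (1, 1) h11 (0, 1) h01
  obtain ⟨hBbox, hBopt⟩ := hopt (1, 1) h11 (1, 1) h11 (0, 1) h01
  set a := M (1, 0) (1, 1) (0, 1) with ha
  set b := M (1, 1) (1, 1) (0, 1) with hb
  have hy0 : ((ℓ/3, 2*ℓ/3) : ℝ × ℝ) ∈ box ℓ := by
    constructor <;> constructor <;> simp <;> linarith
  have hy1 : ((0, ℓ/2) : ℝ × ℝ) ∈ box ℓ := by
    constructor <;> constructor <;> simp <;> linarith
  have hA := hAopt _ hy0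
  have hB := hBopt _ hy1
  obtain ⟨⟨ha1l, ha1u⟩, ⟨ha2l, ha2u⟩⟩ := hAbox
  obtain ⟨⟨hb1l, hb1u⟩, ⟨hb2l, hb2u⟩⟩ := hBbox
  -- unfold utilities
  have uj0 : ∀ x y : ℝ, uj ℓ x 0 y = ℓ := by intro x y; simp [uj]
  have uj1 : ∀ x y : ℝ, uj ℓ x 1 y = ℓ - |x - y| := by intro x y; norm_num [uj]
  simp only [u2, uj0, uj1] at hA hB
  -- compute constant absolute values
  rw [show |(0:ℝ) - ℓ/3| = ℓ/3 by rw [abs_of_nonpos (by linarith)]; ring,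
      show |ℓ/2 - ℓ/3| = ℓ/6 by rw [abs_of_nonneg (by linarith)]; ring,
      show |ℓ/2 - 2*ℓ/3| = ℓ/6 by rw [abs_of_nonpos (by linarith)]; ring,
      show |ℓ - 2*ℓ/3| = ℓ/3 by rw [abs_of_nonneg (by linarith)]; ring] at hA
  rw [show |(0:ℝ) - 0| = 0 by simp,
      show |(0:ℝ) - ℓ/2| = ℓ/2 by rw [abs_of_nonpos (by linarith)]; ring,
      show |ℓ/2 - 0| = ℓ/2 by rw [abs_of_nonneg (by linarith)]; ring,
      show |ℓ/2 - ℓ/2| = 0 by simp,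
      show |ℓ - ℓ/2| = ℓ/2 by rw [abs_of_nonneg (by linarith)]; ring] at hB
  have hAmin : (5*ℓ/3 : ℝ) ≤
      min (min (ℓ - |0 - a.1| + ℓ) (ℓ - |ℓ/2 - a.1| + (ℓ - |ℓ/2 - a.2|)))
        (ℓ + (ℓ - |ℓ - a.2|)) := by
    refine le_trans ?_ hA
    have : min (min (ℓ - ℓ/3 + ℓ) (ℓ - ℓ/6 + (ℓ - ℓ/6))) (ℓ + (ℓ - ℓ/3)) = 5*ℓ/3 := by
      rw [show ℓ - ℓ/3 + ℓ = 5*ℓ/3 by ring, show ℓ - ℓ/6 + (ℓ - ℓ/6) = 5*ℓ/3 by ring,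
          show ℓ + (ℓ - ℓ/3) = 5*ℓ/3 by ring, min_self, min_self]
    linarith [le_of_eq this.symm, le_refl (0:ℝ)]
  have hBmin : (3*ℓ/2 : ℝ) ≤
      min (min (ℓ - |0 - b.1| + (ℓ - |0 - b.2|)) (ℓ - |ℓ/2 - b.1| + (ℓ - |ℓ/2 - b.2|)))
        (ℓ + (ℓ - |ℓ - b.2|)) := by
    refine le_trans ?_ hB
    rw [show ℓ - 0 + (ℓ - ℓ/2) = 3*ℓ/2 by ring, show ℓ - ℓ/2 + (ℓ - 0) = 3*ℓ/2 by ring,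
        show ℓ + (ℓ - ℓ/2) = 3*ℓ/2 by ring, min_self, min_self]
  rw [le_min_iff, le_min_iff] at hAmin hBmin
  obtain ⟨⟨hA1, hA2⟩, hA3⟩ := hAmin
  obtain ⟨⟨hB1, _⟩, hB3⟩ := hBmin
  -- From profile A: a.1 ≥ ℓ/3
  have habs1 : ℓ - a.2 ≤ |ℓ - a.2| := le_abs_self _
  have habs2 : a.2 - ℓ/2 ≤ |ℓ/2 - a.2| := by
    have := neg_abs_le (ℓ/2 - a.2); linarith [abs_sub_comm (ℓ/2) a.2, le_abs_self (a.2 - ℓ/2),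
      (abs_sub_comm (ℓ/2) a.2 ▸ le_abs_self (a.2 - ℓ/2) : a.2 - ℓ/2 ≤ |ℓ/2 - a.2|)]
  have habs3 : ℓ/2 - a.1 ≤ |ℓ/2 - a.1| := le_abs_self _
  have ha2ge : 2*ℓ/3 ≤ a.2 := by linarith
  have ha1ge : ℓ/3 ≤ a.1 := by linarith
  -- From profile B: b.1 = 0
  have hbabs1 : ℓ - b.2 ≤ |ℓ - b.2| := le_abs_self _
  have hb2ge : ℓ/2 ≤ b.2 := by linarith
  have hb2abs : b.2 ≤ |0 - b.2| := by
    have : |0 - b.2| = |b.2| := by rw [abs_sub_comm]; simp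
    rw [this]; exact le_abs_self _
  have hb1abs : |0 - b.1| ≤ 0 := by linarith
  -- strategy-proofness for agent 1
  have hSP := ((hsp (1, 0) h10 (1, 1) h11 (0, 1) h01).1 (1, 1) h11)
  rw [← ha, ← hb] at hSP
  simp only [u2, uj0, uj1] at hSP
  -- agent 1's true utility at b is ≥ 2ℓ, at a is ≤ 5ℓ/3
  have h1a : |0 - a.1| = a.1 := by rw [abs_sub_comm]; simpa using abs_of_nonneg ha1l
  rw [h1a] at hSP
  have : (0:ℝ) ≤ |0 - b.1| := abs_nonneg _
  linarith
end

section
/- The Fixed^{0,1} mechanism is 1/2-approximate for the Egalitarian objective in k-facility games with preferences in {0,1}^k: let y* = (ℓ/2, …, ℓ/2) ∈ [0,ℓ]^k. For every profile of n ≥ 1 agents with locations x_i ∈ [0, ℓ] and preferences t_i ∈ {0,1}^k, every agent satisfies u(x_i, t_i, y*) ≥ k·ℓ/2, and min_i u(x_i, t_i, y*) ≥ (1/2) · sup_{y∈[0,ℓ]^k} min_i u(x_i, t_i, y). -/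
/-- Total utility of an agent at `x ∈ [0,ℓ]` with preference vector `t` for `k`
facilities placed at `y`: facility `j` contributes the distance if `t j = -1`,
the constant `ℓ` if `t j = 0`, and `ℓ` minus the distance if `t j = 1`. -/
noncomputable def uk (ℓ : ℝ) {k : ℕ} (x : ℝ) (t : Fin k → ℤ) (y : Fin k → ℝ) : ℝ :=
  ∑ j, (if t j = -1 then |x - y j| else if t j = 0 then ℓ else ℓ - |x - y j|)

/-- Admissible placements of the `k` facilities: `[0,ℓ]^k`. -/
def boxk (ℓ : ℝ) (k : ℕ) : Set (Fin k → ℝ) := {y | ∀ j, 0 ≤ y j ∧ y j ≤ ℓ}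

lemma uk_le (ℓ : ℝ) {k : ℕ} (x : ℝ) (t : Fin k → ℤ) (y : Fin k → ℝ)
    (ht : ∀ j, t j = 0 ∨ t j = 1) : uk ℓ x t y ≤ (k : ℝ) * ℓ := by
  have : uk ℓ x t y ≤ ∑ _j : Fin k, ℓ := by
    apply Finset.sum_le_sum
    intro j _
    rcases ht j with h | h
    · simp [h]
    · simp [h]
  simpa using this

/-- the `Fixed^{0,1}` mechanism, placing every facility at `ℓ/2`,
gives every agent with preferences in `{0,1}^k` utility at least `k·ℓ/2` and is
`1/2`-approximate for the Egalitarian objective. -/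
theorem fixed01_egalitarian_approx
    (ℓ : ℝ) (hℓ : 0 < ℓ) (k n : ℕ) (hk : 0 < k) (hn : 0 < n)
    (x : Fin n → ℝ) (t : Fin n → Fin k → ℤ)
    (hx : ∀ i, x i ∈ Set.Icc 0 ℓ)
    (ht : ∀ i j, t i j = 0 ∨ t i j = 1) :
    (∀ i, (k : ℝ) * ℓ / 2 ≤ uk ℓ (x i) (t i) (fun _ => ℓ / 2)) ∧
    (1/2) * (⨆ y ∈ boxk ℓ k, ⨅ i, uk ℓ (x i) (t i) y) ≤
      ⨅ i, uk ℓ (x i) (t i) (fun _ => ℓ / 2) := by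
  have hlow : ∀ i, (k : ℝ) * ℓ / 2 ≤ uk ℓ (x i) (t i) (fun _ => ℓ / 2) := by
    intro i
    have : ∑ _j : Fin k, ℓ / 2 ≤ uk ℓ (x i) (t i) (fun _ => ℓ / 2) := by
      apply Finset.sum_le_sum
      intro j _
      rcases ht i j with h | h
      · simp [h]; linarith
      · have hxi := hx i
        simp only [Set.mem_Icc] at hxi
        have : |x i - ℓ / 2| ≤ ℓ / 2 := by
          rw [abs_le]; constructor <;> linarith [hxi.1, hxi.2]
        simp [h]; linarith
    calc (k : ℝ) * ℓ / 2 = ∑ _j : Fin k, ℓ / 2 := by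
          simp [Finset.sum_const]; ring
      _ ≤ _ := this
  refine ⟨hlow, ?_⟩
  haveI : Nonempty (Fin n) := ⟨⟨0, hn⟩⟩
  have hsup : (⨆ y ∈ boxk ℓ k, ⨅ i, uk ℓ (x i) (t i) y) ≤ (k : ℝ) * ℓ := by
    apply Real.iSup_le _ (by positivity)
    intro y
    apply Real.iSup_le _ (by positivity)
    intro _
    have hbdd : BddBelow (Set.range fun i => uk ℓ (x i) (t i) y) :=
      (Set.finite_range _).bddBelow
    calc (⨅ i, uk ℓ (x i) (t i) y) ≤ uk ℓ (x ⟨0, hn⟩) (t ⟨0, hn⟩) y :=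
          ciInf_le hbdd _
      _ ≤ (k : ℝ) * ℓ := uk_le ℓ _ _ _ (ht _)
  have hinf : (k : ℝ) * ℓ / 2 ≤ ⨅ i, uk ℓ (x i) (t i) (fun _ => ℓ / 2) :=
    le_ciInf hlow
  nlinarith [hsup, hinf]
end

section
/- The Fixed^{0,−1} mechanism is (⌊k/2⌋/k)-approximate for the Egalitarian objective in k-facility games with preferences in {−1,0}^k: let y* ∈ [0,ℓ]^k place facilities 1, …, ⌈k/2⌉ at 0 and facilities ⌈k/2⌉+1, …, k at ℓ. For every profile of n ≥ 1 agents with locations x_i ∈ [0, ℓ] and preferences t_i ∈ {−1,0}^k, every agent satisfies u(x_i, t_i, y*) ≥ ⌊k/2⌋·ℓ, and min_i u(x_i, t_i, y*) ≥ (⌊k/2⌋/k) · sup_{y∈[0,ℓ]^k} min_i u(x_i, t_i, y). -/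
open Finset

theorem Fin.sum_ite_val_lt {M : Type*} [AddCommMonoid M] {k c : ℕ} (hc : c ≤ k) (a b : M) :
    ∑ j : Fin k, (if (j : ℕ) < c then a else b) = c • a + (k - c) • b := by
  have hlt : #{j : Fin k | (j : ℕ) < c} = c := by rw [Fin.card_filter_val_lt, min_eq_right hc]
  have hge : #{j : Fin k | ¬ (j : ℕ) < c} = k - c := by
    rw [filter_not, card_sdiff_of_subset (filter_subset _ _), hlt, card_univ, Fintype.card_fin]
  rw [sum_ite, Finset.sum_const, Finset.sum_const, hlt, hge]

theorem Real.iInf_le_of_forall_le {ι : Sort*} {f : ι → ℝ} {a : ℝ} (h : ∀ i, f i ≤ a)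
    (ha : 0 ≤ a) : ⨅ i, f i ≤ a := by
  rcases isEmpty_or_nonempty ι with hι | ⟨⟨i⟩⟩
  · rwa [Real.iInf_of_isEmpty]
  by_cases hf : BddBelow (Set.range f)
  · exact ciInf_le_of_le hf i (h i)
  · rwa [Real.iInf_of_not_bddBelow hf]

/-- `uk ℓ x t y` is definitionally `∑ j, facilityUtility ℓ x (t j) (y j)`. -/
noncomputable def facilityUtility (ℓ x : ℝ) (τ : ℤ) (z : ℝ) : ℝ :=
  if τ = -1 then |x - z| else if τ = 0 then ℓ else ℓ - |x - z|

theorem facilityUtility_le {ℓ x z : ℝ} (τ : ℤ) (h : |x - z| ≤ ℓ) :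
    facilityUtility ℓ x τ z ≤ ℓ := by
  unfold facilityUtility
  split_ifs <;> linarith [abs_nonneg (x - z)]

theorem abs_sub_le_facilityUtility {ℓ x z : ℝ} {τ : ℤ} (hτ : τ = -1 ∨ τ = 0)
    (h : |x - z| ≤ ℓ) : |x - z| ≤ facilityUtility ℓ x τ z := by
  rcases hτ with rfl | rfl <;> simp [facilityUtility, h]

theorem uk_le_mul {ℓ x : ℝ} {k : ℕ} (t : Fin k → ℤ) {y : Fin k → ℝ} (hx : x ∈ Set.Icc 0 ℓ)
    (hy : y ∈ boxk ℓ k) : uk ℓ x t y ≤ k * ℓ :=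
  calc uk ℓ x t y ≤ ∑ _j : Fin k, ℓ := sum_le_sum fun j _ =>
        facilityUtility_le (t j) (abs_sub_le_of_nonneg_of_le hx.1 hx.2 (hy j).1 (hy j).2)
    _ = k * ℓ := by simp

theorem egalitarian_le_mul {ℓ : ℝ} (hℓ : 0 ≤ ℓ) {k : ℕ} {ι : Type*} {x : ι → ℝ}
    (t : ι → Fin k → ℤ) (hx : ∀ i, x i ∈ Set.Icc 0 ℓ) :
    ⨆ y ∈ boxk ℓ k, ⨅ i, uk ℓ (x i) (t i) y ≤ k * ℓ := by
  have hkℓ : 0 ≤ (k : ℝ) * ℓ := by positivity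
  exact Real.iSup_le (fun y => Real.iSup_le (fun hy =>
    Real.iInf_le_of_forall_le (fun i => uk_le_mul (t i) (hx i) hy) hkℓ) hkℓ) hkℓ

theorem sum_abs_sub_split_placement {ℓ x : ℝ} (hx : x ∈ Set.Icc 0 ℓ) {k c : ℕ} (hc : c ≤ k) :
    ∑ j : Fin k, |x - if (j : ℕ) < c then 0 else ℓ| = c * x + (k - c : ℕ) * (ℓ - x) := by
  simp only [apply_ite (fun z => |x - z|), Fin.sum_ite_val_lt hc, nsmul_eq_mul, sub_zero,
    abs_of_nonneg hx.1, abs_of_nonpos (sub_nonpos.2 hx.2), neg_sub]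

theorem mul_le_uk_split_placement {ℓ x : ℝ} {k c : ℕ} {t : Fin k → ℤ}
    (ht : ∀ j, t j = -1 ∨ t j = 0) (hx : x ∈ Set.Icc 0 ℓ) (hc : c ≤ k) (hkc : k - c ≤ c) :
    ((k - c : ℕ) : ℝ) * ℓ ≤ uk ℓ x t (fun j => if (j : ℕ) < c then 0 else ℓ) := by
  have hkc' : ((k - c : ℕ) : ℝ) * x ≤ c * x :=
    mul_le_mul_of_nonneg_right (by exact_mod_cast hkc) hx.1
  calc ((k - c : ℕ) : ℝ) * ℓ ≤ c * x + (k - c : ℕ) * (ℓ - x) := by linarith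
    _ = ∑ j : Fin k, |x - if (j : ℕ) < c then 0 else ℓ| := (sum_abs_sub_split_placement hx hc).symm
    _ ≤ uk ℓ x t (fun j => if (j : ℕ) < c then 0 else ℓ) := by
      refine sum_le_sum fun j _ => abs_sub_le_facilityUtility (ht j) ?_
      split_ifs
      · exact abs_sub_le_of_nonneg_of_le hx.1 hx.2 le_rfl (hx.1.trans hx.2)
      · exact abs_sub_le_of_nonneg_of_le hx.1 hx.2 (hx.1.trans hx.2) le_rfl

theorem fixed0m1_egalitarian_approx_general
    (ℓ : ℝ) (hℓ : 0 < ℓ) (k n : ℕ) (hn : 0 < n)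
    (x : Fin n → ℝ) (t : Fin n → Fin k → ℤ)
    (hx : ∀ i, x i ∈ Set.Icc 0 ℓ)
    (ht : ∀ i j, t i j = -1 ∨ t i j = 0) :
    (∀ i, ((k / 2 : ℕ) : ℝ) * ℓ ≤
        uk ℓ (x i) (t i) (fun j => if (j : ℕ) < (k + 1) / 2 then 0 else ℓ)) ∧
    (((k / 2 : ℕ) : ℝ) / (k : ℝ)) * (⨆ y ∈ boxk ℓ k, ⨅ i, uk ℓ (x i) (t i) y) ≤
      ⨅ i, uk ℓ (x i) (t i) (fun j => if (j : ℕ) < (k + 1) / 2 then 0 else ℓ) := by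
  have : Nonempty (Fin n) := ⟨⟨0, hn⟩⟩
  have hfloor : k - (k + 1) / 2 = k / 2 := by omega
  have hfixed : ∀ i, ((k / 2 : ℕ) : ℝ) * ℓ ≤
      uk ℓ (x i) (t i) (fun j => if (j : ℕ) < (k + 1) / 2 then 0 else ℓ) := fun i =>
    hfloor ▸ mul_le_uk_split_placement (ht i) (hx i) (by omega) (by omega)
  refine ⟨hfixed, ?_⟩
  calc ((k / 2 : ℕ) : ℝ) / k * (⨆ y ∈ boxk ℓ k, ⨅ i, uk ℓ (x i) (t i) y)
      ≤ ((k / 2 : ℕ) : ℝ) / k * (k * ℓ) :=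
        mul_le_mul_of_nonneg_left (egalitarian_le_mul hℓ.le t hx) (by positivity)
    _ = ((k / 2 : ℕ) : ℝ) * ℓ := by
        rw [← mul_assoc, div_mul_cancel_of_imp fun hk => by simp_all]
    _ ≤ _ := le_ciInf hfixed

/-- the `Fixed^{0,-1}` mechanism, placing the first `⌈k/2⌉`
facilities at `0` and the remaining `⌊k/2⌋` at `ℓ`, gives every agent with
preferences in `{-1,0}^k` utility at least `⌊k/2⌋·ℓ` and is
`⌊k/2⌋/k`-approximate for the Egalitarian objective. -/
theorem fixed0m1_egalitarian_approx
    (ℓ : ℝ) (hℓ : 0 < ℓ) (k n : ℕ) (hk : 0 < k) (hn : 0 < n)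
    (x : Fin n → ℝ) (t : Fin n → Fin k → ℤ)
    (hx : ∀ i, x i ∈ Set.Icc 0 ℓ)
    (ht : ∀ i j, t i j = -1 ∨ t i j = 0) :
    (∀ i, ((k / 2 : ℕ) : ℝ) * ℓ ≤
        uk ℓ (x i) (t i) (fun j => if (j : ℕ) < (k + 1) / 2 then 0 else ℓ)) ∧
    (((k / 2 : ℕ) : ℝ) / (k : ℝ)) * (⨆ y ∈ boxk ℓ k, ⨅ i, uk ℓ (x i) (t i) y) ≤
      ⨅ i, uk ℓ (x i) (t i) (fun j => if (j : ℕ) < (k + 1) / 2 then 0 else ℓ) :=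
  fixed0m1_egalitarian_approx_general ℓ hℓ k n hn x t hx ht
end

section
/- The Random mechanism is 1/2-approximate for the Utilitarian and Happiness objectives: for every agent with location x ∈ [0, ℓ] and preferences t ∈ {−1,0,1}², the expected utility Ē(x,t) = (1/2)·u(x, t, (0,0)) + (1/2)·u(x, t, (ℓ,ℓ)) satisfies Ē(x,t) ≥ (1/2) · sup_{y∈[0,ℓ]²} u(x, t, y). Consequently, for every profile of n ≥ 1 agents: (Utilitarian) Σ_i Ē(x_i, t_i) ≥ (1/2) · sup_{y∈[0,ℓ]²} Σ_i u(x_i, t_i, y); and (Happiness) min_i Ē(x_i, t_i)/u_i* ≥ (1/2) · sup_{y∈[0,ℓ]²} min_i u(x_i, t_i, y)/u_i*, where u_i* = sup_{y∈[0,ℓ]²} u(x_i, t_i, y) (which satisfies u_i* ≥ ℓ > 0). -/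
lemma uj_bounds (ℓ x : ℝ) (hx : x ∈ Set.Icc (0:ℝ) ℓ) (t : ℤ)
    (ht : t = -1 ∨ t = 0 ∨ t = 1) {yj : ℝ} (hy : yj ∈ Set.Icc (0:ℝ) ℓ) :
    0 ≤ uj ℓ x t yj ∧ uj ℓ x t yj ≤ ℓ := by
  obtain ⟨h1, h2⟩ := hx; obtain ⟨h3, h4⟩ := hy
  have habs : |x - yj| ≤ ℓ := abs_le.mpr ⟨by linarith, by linarith⟩
  have habs0 : 0 ≤ |x - yj| := abs_nonneg _
  rcases ht with h|h|h <;> simp [uj, h] <;> linarith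

lemma u2_bounds (ℓ x : ℝ) (hx : x ∈ Set.Icc (0:ℝ) ℓ) (t : ℤ × ℤ)
    (ht : t ∈ validPref) {y : ℝ × ℝ} (hy : y ∈ box ℓ) :
    0 ≤ u2 ℓ x t y ∧ u2 ℓ x t y ≤ 2 * ℓ := by
  obtain ⟨p1, q1⟩ := uj_bounds ℓ x hx t.1 ht.1 hy.1
  obtain ⟨p2, q2⟩ := uj_bounds ℓ x hx t.2 ht.2 hy.2
  exact ⟨by simpa [u2] using add_nonneg p1 p2, by simp only [u2]; linarith⟩

lemma uj_ends (ℓ x : ℝ) (hx : x ∈ Set.Icc (0:ℝ) ℓ) (t : ℤ)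
    (ht : t = -1 ∨ t = 0 ∨ t = 1) :
    ℓ ≤ uj ℓ x t 0 + uj ℓ x t ℓ := by
  obtain ⟨h1, h2⟩ := hx
  have e1 : |x - 0| = x := by rw [sub_zero, abs_of_nonneg h1]
  have e2 : |x - ℓ| = ℓ - x := by rw [abs_of_nonpos (by linarith)]; ring
  rcases ht with h|h|h <;> simp [uj, h, e2, abs_of_nonneg h1] <;> linarith

lemma u2_ends (ℓ x : ℝ) (hℓ : 0 < ℓ) (hx : x ∈ Set.Icc (0:ℝ) ℓ) (t : ℤ × ℤ)
    (ht : t ∈ validPref) :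
    2 * ℓ ≤ u2 ℓ x t (0, 0) + u2 ℓ x t (ℓ, ℓ) := by
  have a := uj_ends ℓ x hx t.1 ht.1
  have b := uj_ends ℓ x hx t.2 ht.2
  simp only [u2]; linarith

lemma le_biSup' (f : ℝ × ℝ → ℝ) (ℓ : ℝ)
    (hb : BddAbove (Set.range fun y => ⨆ _ : y ∈ box ℓ, f y)) {y} (hy : y ∈ box ℓ) :
    f y ≤ ⨆ y ∈ box ℓ, f y := by
  have h1 : f y ≤ ⨆ _ : y ∈ box ℓ, f y :=
    le_ciSup (f := fun _ : y ∈ box ℓ => f y)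
      ⟨f y, by rintro a ⟨_, rfl⟩; exact le_rfl⟩ hy
  exact h1.trans (le_ciSup hb y)

lemma zero_mem_box (ℓ : ℝ) (hℓ : 0 < ℓ) : ((0:ℝ), (0:ℝ)) ∈ box ℓ :=
  ⟨⟨le_refl _, hℓ.le⟩, ⟨le_refl _, hℓ.le⟩⟩

lemma ends_mem_box (ℓ : ℝ) (hℓ : 0 < ℓ) : ((ℓ:ℝ), (ℓ:ℝ)) ∈ box ℓ :=
  ⟨⟨hℓ.le, le_refl _⟩, ⟨hℓ.le, le_refl _⟩⟩

lemma bddAbove_u2 (ℓ x : ℝ) (hℓ : 0 < ℓ) (hx : x ∈ Set.Icc (0:ℝ) ℓ) (t : ℤ × ℤ)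
    (ht : t ∈ validPref) :
    BddAbove (Set.range fun y => ⨆ _ : y ∈ box ℓ, u2 ℓ x t y) := by
  refine ⟨2 * ℓ, ?_⟩
  rintro a ⟨y, rfl⟩
  exact Real.iSup_le (fun hy => (u2_bounds ℓ x hx t ht hy).2) (by linarith)

lemma sup_u2_le (ℓ x : ℝ) (hℓ : 0 < ℓ) (hx : x ∈ Set.Icc (0:ℝ) ℓ) (t : ℤ × ℤ)
    (ht : t ∈ validPref) :
    (⨆ y ∈ box ℓ, u2 ℓ x t y) ≤ 2 * ℓ :=
  Real.iSup_le (fun _ => Real.iSup_le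
    (fun hy => (u2_bounds ℓ x hx t ht hy).2) (by linarith)) (by linarith)

lemma sup_u2_ge (ℓ x : ℝ) (hℓ : 0 < ℓ) (hx : x ∈ Set.Icc (0:ℝ) ℓ) (t : ℤ × ℤ)
    (ht : t ∈ validPref) :
    ℓ ≤ (⨆ y ∈ box ℓ, u2 ℓ x t y) := by
  have hb := bddAbove_u2 ℓ x hℓ hx t ht
  have h0 := le_biSup' (u2 ℓ x t) ℓ hb (zero_mem_box ℓ hℓ)
  have h1 := le_biSup' (u2 ℓ x t) ℓ hb (ends_mem_box ℓ hℓ)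
  have := u2_ends ℓ x hℓ hx t ht
  linarith

/-- the `Random` mechanism (both facilities at `0` with
probability `1/2`, both at `ℓ` with probability `1/2`) is `1/2`-approximate in
expectation for every single agent, and hence for the Utilitarian and the
Happiness objectives. -/
theorem random_utilitarian_happiness_approx (ℓ : ℝ) (hℓ : 0 < ℓ) :
    -- per-agent guarantee
    (∀ x ∈ Set.Icc 0 ℓ, ∀ t ∈ validPref,
      (1/2) * (⨆ y ∈ box ℓ, u2 ℓ x t y) ≤
        (1/2) * u2 ℓ x t (0, 0) + (1/2) * u2 ℓ x t (ℓ, ℓ)) ∧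
    -- Utilitarian
    (∀ n : ℕ, 0 < n → ∀ x : Fin n → ℝ, ∀ t : Fin n → ℤ × ℤ,
      (∀ i, x i ∈ Set.Icc 0 ℓ) → (∀ i, t i ∈ validPref) →
      (1/2) * (⨆ y ∈ box ℓ, ∑ i, u2 ℓ (x i) (t i) y) ≤
        ∑ i, ((1/2) * u2 ℓ (x i) (t i) (0, 0) + (1/2) * u2 ℓ (x i) (t i) (ℓ, ℓ))) ∧
    -- Happiness
    (∀ n : ℕ, 0 < n → ∀ x : Fin n → ℝ, ∀ t : Fin n → ℤ × ℤ,
      (∀ i, x i ∈ Set.Icc 0 ℓ) → (∀ i, t i ∈ validPref) →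
      (1/2) * (⨆ y ∈ box ℓ, ⨅ i,
          u2 ℓ (x i) (t i) y / (⨆ y' ∈ box ℓ, u2 ℓ (x i) (t i) y')) ≤
        ⨅ i, ((1/2) * u2 ℓ (x i) (t i) (0, 0) + (1/2) * u2 ℓ (x i) (t i) (ℓ, ℓ)) /
            (⨆ y' ∈ box ℓ, u2 ℓ (x i) (t i) y')) := by
  refine ⟨?_, ?_, ?_⟩
  · intro x hx t ht
    have h1 := sup_u2_le ℓ x hℓ hx t ht
    have h2 := u2_ends ℓ x hℓ hx t ht
    linarith
  · intro n hn x t hx ht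
    have key : (⨆ y ∈ box ℓ, ∑ i, u2 ℓ (x i) (t i) y) ≤
        ∑ i, (u2 ℓ (x i) (t i) (0, 0) + u2 ℓ (x i) (t i) (ℓ, ℓ)) := by
      have hpos : (0:ℝ) ≤ ∑ i, (u2 ℓ (x i) (t i) (0, 0) + u2 ℓ (x i) (t i) (ℓ, ℓ)) :=
        Finset.sum_nonneg fun i _ => le_trans (by linarith) (u2_ends ℓ (x i) hℓ (hx i) (t i) (ht i))
      refine Real.iSup_le (fun y => Real.iSup_le (fun hy => ?_) hpos) hpos
      exact Finset.sum_le_sum fun i _ => le_trans (u2_bounds ℓ (x i) (hx i) (t i) (ht i) hy).2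
        (u2_ends ℓ (x i) hℓ (hx i) (t i) (ht i))
    have : ∑ i, ((1/2) * u2 ℓ (x i) (t i) (0, 0) + (1/2) * u2 ℓ (x i) (t i) (ℓ, ℓ)) =
        (1/2) * ∑ i, (u2 ℓ (x i) (t i) (0, 0) + u2 ℓ (x i) (t i) (ℓ, ℓ)) := by
      rw [Finset.mul_sum]; exact Finset.sum_congr rfl fun i _ => by ring
    rw [this]; linarith
  · intro n hn x t hx ht
    haveI : Nonempty (Fin n) := ⟨⟨0, hn⟩⟩
    set S : Fin n → ℝ := fun i => ⨆ y' ∈ box ℓ, u2 ℓ (x i) (t i) y' with hS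
    have hSge : ∀ i, ℓ ≤ S i := fun i => sup_u2_ge ℓ (x i) hℓ (hx i) (t i) (ht i)
    have hSle : ∀ i, S i ≤ 2 * ℓ := fun i => sup_u2_le ℓ (x i) hℓ (hx i) (t i) (ht i)
    have hSpos : ∀ i, 0 < S i := fun i => lt_of_lt_of_le hℓ (hSge i)
    have hg : ∀ i, (1/2 : ℝ) ≤ ((1/2) * u2 ℓ (x i) (t i) (0, 0) +
        (1/2) * u2 ℓ (x i) (t i) (ℓ, ℓ)) / S i := by
      intro i
      rw [le_div_iff₀ (hSpos i)]
      have := u2_ends ℓ (x i) hℓ (hx i) (t i) (ht i)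
      have := hSle i
      linarith
    refine le_ciInf fun j => ?_
    have hkey : (⨆ y ∈ box ℓ, ⨅ i, u2 ℓ (x i) (t i) y / S i) ≤
        2 * (((1/2) * u2 ℓ (x j) (t j) (0, 0) + (1/2) * u2 ℓ (x j) (t j) (ℓ, ℓ)) / S j) := by
      have hrhs : (0:ℝ) ≤ 2 * (((1/2) * u2 ℓ (x j) (t j) (0, 0) +
          (1/2) * u2 ℓ (x j) (t j) (ℓ, ℓ)) / S j) := by
        have := hg j; linarith
      refine Real.iSup_le (fun y => Real.iSup_le (fun hy => ?_) hrhs) hrhs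
      have hinf : (⨅ i, u2 ℓ (x i) (t i) y / S i) ≤ u2 ℓ (x j) (t j) y / S j := by
        refine ciInf_le ⟨0, ?_⟩ j
        rintro a ⟨i, rfl⟩
        exact div_nonneg (u2_bounds ℓ (x i) (hx i) (t i) (ht i) hy).1 (hSpos i).le
      have hle1 : u2 ℓ (x j) (t j) y / S j ≤ 1 := by
        rw [div_le_one (hSpos j)]
        exact le_biSup' (u2 ℓ (x j) (t j)) ℓ
          (bddAbove_u2 ℓ (x j) hℓ (hx j) (t j) (ht j)) hy
      have := hg j
      linarith
    linarith
end

section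
/- The Fixed^{0,1} and Fixed^{0,−1} mechanisms achieve their Egalitarian guarantees also for the Utilitarian and Happiness objectives: (a) for preferences in {0,1}^k and y* = (ℓ/2, …, ℓ/2), every agent satisfies u(x, t, y*) ≥ (1/2) · sup_{y∈[0,ℓ]^k} u(x, t, y), and hence for every profile of n ≥ 1 agents, Σ_i u(x_i, t_i, y*) ≥ (1/2) · sup_{y} Σ_i u(x_i, t_i, y) and min_i u(x_i, t_i, y*)/u_i* ≥ (1/2) · sup_{y} min_i u(x_i, t_i, y)/u_i*; (b) for preferences in {−1,0}^k and y** placing facilities 1, …, ⌈k/2⌉ at 0 and the rest at ℓ, every agent satisfies u(x, t, y**) ≥ (⌊k/2⌋/k) · sup_{y∈[0,ℓ]^k} u(x, t, y), and hence for every profile, Σ_i u(x_i, t_i, y**) ≥ (⌊k/2⌋/k) · sup_{y} Σ_i u(x_i, t_i, y) and min_i u(x_i, t_i, y**)/u_i* ≥ (⌊k/2⌋/k) · sup_{y} min_i u(x_i, t_i, y)/u_i*. Here u_i* = sup_{y∈[0,ℓ]^k} u(x_i, t_i, y), which satisfies u_i* ≥ ℓ > 0. -/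
/-!
Every agent's utility is at most `k ℓ` on `[0, ℓ]^k`, since each facility contributes at most
`ℓ`. With every facility at `ℓ/2`, an agent with preferences in `{0,1}^k` gets at least `ℓ/2`
per facility; with `⌈k/2⌉` facilities at `0` and `⌊k/2⌋` at `ℓ`, an agent at `x` with preferences
in `{-1,0}^k` gets at least `x` from each of the former and `ℓ - x` from each of the latter,
hence at least `⌈k/2⌉ x + ⌊k/2⌋ (ℓ - x) ≥ ⌊k/2⌋ ℓ`. So the fixed placement `y₀` satisfies `ρ u(y) ≤ u(y₀)` for every agent
and every placement `y`, and this agent-wise domination passes to sums and to minima of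
utilities normalised by nonnegative constants.
-/

open Finset Set

section Domination

variable {α : Type*} {S : Set α} {ρ : ℝ}

theorem mul_biSup_le_of_nonneg {f : α → ℝ} {C : ℝ} (hρ : 0 ≤ ρ) (hC : 0 ≤ C)
    (h : ∀ y ∈ S, ρ * f y ≤ C) : ρ * ⨆ y ∈ S, f y ≤ C := by
  rw [Real.mul_iSup_of_nonneg hρ]
  refine Real.iSup_le (fun y => ?_) hC
  rw [Real.mul_iSup_of_nonneg hρ]
  exact Real.iSup_le (h y) hC

variable {ι : Type*} {u : ι → α → ℝ} {y₀ : α}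

theorem mul_biSup_sum_le {s : Finset ι} (hρ : 0 ≤ ρ) (hy₀ : ∀ i ∈ s, 0 ≤ u i y₀)
    (h : ∀ i ∈ s, ∀ y ∈ S, ρ * u i y ≤ u i y₀) :
    ρ * (⨆ y ∈ S, ∑ i ∈ s, u i y) ≤ ∑ i ∈ s, u i y₀ :=
  mul_biSup_le_of_nonneg hρ (sum_nonneg hy₀) fun y hy => by
    rw [mul_sum]
    exact sum_le_sum fun i hi => h i hi y hy

theorem mul_biSup_iInf_div_le [Finite ι] {c : ι → ℝ} (hρ : 0 ≤ ρ) (hc : ∀ i, 0 ≤ c i)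
    (hy₀ : ∀ i, 0 ≤ u i y₀) (h : ∀ i, ∀ y ∈ S, ρ * u i y ≤ u i y₀) :
    ρ * (⨆ y ∈ S, ⨅ i, u i y / c i) ≤ ⨅ i, u i y₀ / c i := by
  refine mul_biSup_le_of_nonneg hρ (Real.iInf_nonneg fun i => div_nonneg (hy₀ i) (hc i))
    fun y hy => ?_
  rw [Real.mul_iInf_of_nonneg hρ]
  refine ciInf_mono (Finite.bddBelow_range _) fun i => ?_
  rw [← mul_div_assoc]
  exact div_le_div_of_nonneg_right (h i y hy) (hc i)

end Domination

theorem sum_ite_val_lt_eq {k c : ℕ} (hc : c ≤ k) (a b : ℝ) :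
    ∑ j : Fin k, (if (j : ℕ) < c then a else b) = c * a + (k - c : ℕ) * b := by
  rw [sum_ite, sum_const, sum_const, filter_not, card_sdiff_of_subset (filter_subset _ _),
    Fin.card_filter_val_lt, min_eq_right hc]
  simp

section FacilityLocation

variable {ℓ x : ℝ} {k : ℕ} {t : Fin k → ℤ}

theorem uk_nonneg (hx : x ∈ Icc 0 ℓ) (t : Fin k → ℤ) {y : Fin k → ℝ} (hy : y ∈ boxk ℓ k) :
    0 ≤ uk ℓ x t y := by
  refine sum_nonneg fun j _ => ?_
  have hdist := abs_sub_le_of_nonneg_of_le hx.1 hx.2 (hy j).1 (hy j).2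
  split_ifs
  · exact abs_nonneg _
  · exact hx.1.trans hx.2
  · linarith

theorem uk_le_card_mul (hx : x ∈ Icc 0 ℓ) (t : Fin k → ℤ) {y : Fin k → ℝ}
    (hy : y ∈ boxk ℓ k) : uk ℓ x t y ≤ k * ℓ := by
  have hsum : uk ℓ x t y ≤ ∑ _j : Fin k, ℓ := sum_le_sum fun j _ => by
    have hdist := abs_sub_le_of_nonneg_of_le hx.1 hx.2 (hy j).1 (hy j).2
    have := abs_nonneg (x - y j)
    split_ifs <;> linarith
  simpa using hsum

theorem const_half_mem_boxk (hℓ : 0 ≤ ℓ) : (fun _ => ℓ / 2) ∈ boxk ℓ k :=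
  fun _ => ⟨by linarith, by linarith⟩

theorem split_mem_boxk (hℓ : 0 ≤ ℓ) :
    (fun j : Fin k => if (j : ℕ) < (k + 1) / 2 then 0 else ℓ) ∈ boxk ℓ k := by
  intro j
  dsimp only
  split_ifs
  · exact ⟨le_rfl, hℓ⟩
  · exact ⟨hℓ, le_rfl⟩

theorem card_mul_half_le_uk_const_half (hx : x ∈ Icc 0 ℓ) (ht : ∀ j, t j = 0 ∨ t j = 1) :
    k * (ℓ / 2) ≤ uk ℓ x t (fun _ => ℓ / 2) := by
  have hsum : ∑ _j : Fin k, ℓ / 2 ≤ uk ℓ x t (fun _ => ℓ / 2) := sum_le_sum fun j _ => by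
    have hdist : |x - ℓ / 2| ≤ ℓ / 2 := abs_le.2 ⟨by linarith [hx.1], by linarith [hx.2]⟩
    rcases ht j with h | h <;> simp [h] <;> linarith [hx.1, hx.2]
  simpa using hsum

theorem half_mul_uk_le_uk_const_half (hx : x ∈ Icc 0 ℓ) (ht : ∀ j, t j = 0 ∨ t j = 1)
    {y : Fin k → ℝ} (hy : y ∈ boxk ℓ k) :
    1 / 2 * uk ℓ x t y ≤ uk ℓ x t (fun _ => ℓ / 2) := by
  have := uk_le_card_mul hx t hy
  have := card_mul_half_le_uk_const_half hx ht
  linarith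

theorem floor_half_mul_le_uk_split (hx : x ∈ Icc 0 ℓ) (ht : ∀ j, t j = -1 ∨ t j = 0) :
    ((k / 2 : ℕ) : ℝ) * ℓ ≤ uk ℓ x t (fun j => if (j : ℕ) < (k + 1) / 2 then 0 else ℓ) := by
  set c := (k + 1) / 2
  have hx' : x - ℓ ≤ 0 := by linarith [hx.2]
  have hterm : ∑ j : Fin k, (if (j : ℕ) < c then x else ℓ - x) ≤
      uk ℓ x t (fun j => if (j : ℕ) < c then 0 else ℓ) := sum_le_sum fun j _ => by
    rcases ht j with h | h <;> by_cases hj : (j : ℕ) < c <;>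
      simp [h, hj, abs_of_nonneg hx.1, abs_of_nonpos hx'] <;> linarith [hx.1]
  rw [sum_ite_val_lt_eq (by omega), show k - c = k / 2 by omega] at hterm
  have hfloor : ((k / 2 : ℕ) : ℝ) ≤ c := by exact_mod_cast (show k / 2 ≤ c by omega)
  nlinarith [hx.1, hx.2]

theorem floor_half_div_mul_uk_le_uk_split (hx : x ∈ Icc 0 ℓ) (ht : ∀ j, t j = -1 ∨ t j = 0)
    {y : Fin k → ℝ} (hy : y ∈ boxk ℓ k) :
    ((k / 2 : ℕ) : ℝ) / k * uk ℓ x t y ≤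
      uk ℓ x t (fun j => if (j : ℕ) < (k + 1) / 2 then 0 else ℓ) :=
  calc ((k / 2 : ℕ) : ℝ) / k * uk ℓ x t y ≤ ((k / 2 : ℕ) : ℝ) / k * (k * ℓ) := by
        gcongr
        exact uk_le_card_mul hx t hy
    _ = ((k / 2 : ℕ) : ℝ) * ℓ := by
        -- also for `k = 0`, where `k / 2 = 0` makes both sides vanish despite `x / 0 = 0`
        rw [← mul_assoc, div_mul_cancel_of_imp fun h => by simp_all]
    _ ≤ _ := floor_half_mul_le_uk_split hx ht

theorem approx_objectives_of_agentwise_le (valid : (Fin k → ℤ) → Prop) {ρ : ℝ} (hρ : 0 ≤ ρ)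
    {y₀ : Fin k → ℝ} (hy₀ : ∀ x ∈ Icc 0 ℓ, ∀ t, 0 ≤ uk ℓ x t y₀)
    (h : ∀ x ∈ Icc 0 ℓ, ∀ t, valid t → ∀ y ∈ boxk ℓ k, ρ * uk ℓ x t y ≤ uk ℓ x t y₀) :
    (∀ x ∈ Icc 0 ℓ, ∀ t, valid t → ρ * (⨆ y ∈ boxk ℓ k, uk ℓ x t y) ≤ uk ℓ x t y₀) ∧
    (∀ n : ℕ, ∀ x : Fin n → ℝ, ∀ t : Fin n → Fin k → ℤ,
      (∀ i, x i ∈ Icc 0 ℓ) → (∀ i, valid (t i)) →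
      ρ * (⨆ y ∈ boxk ℓ k, ∑ i, uk ℓ (x i) (t i) y) ≤ ∑ i, uk ℓ (x i) (t i) y₀) ∧
    (∀ n : ℕ, ∀ x : Fin n → ℝ, ∀ t : Fin n → Fin k → ℤ,
      (∀ i, x i ∈ Icc 0 ℓ) → (∀ i, valid (t i)) →
      ρ * (⨆ y ∈ boxk ℓ k, ⨅ i,
          uk ℓ (x i) (t i) y / (⨆ y' ∈ boxk ℓ k, uk ℓ (x i) (t i) y')) ≤
        ⨅ i, uk ℓ (x i) (t i) y₀ / (⨆ y' ∈ boxk ℓ k, uk ℓ (x i) (t i) y')) := by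
  refine ⟨fun x hx t ht => mul_biSup_le_of_nonneg hρ (hy₀ x hx t) (h x hx t ht),
    fun n x t hx ht => ?_, fun n x t hx ht => ?_⟩
  · exact mul_biSup_sum_le hρ (fun i _ => hy₀ (x i) (hx i) (t i))
      fun i _ => h (x i) (hx i) (t i) (ht i)
  · exact mul_biSup_iInf_div_le hρ
      (fun i => Real.iSup_nonneg fun y => Real.iSup_nonneg fun hy => uk_nonneg (hx i) (t i) hy)
      (fun i => hy₀ (x i) (hx i) (t i)) fun i => h (x i) (hx i) (t i) (ht i)

end FacilityLocation

theorem fixed01_fixed0m1_utilitarian_happiness_approx_general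
    (ℓ : ℝ) (k : ℕ) :
    -- (a) Fixed^{0,1}: per-agent guarantee
    ((∀ x ∈ Set.Icc 0 ℓ, ∀ t : Fin k → ℤ, (∀ j, t j = 0 ∨ t j = 1) →
      (1/2) * (⨆ y ∈ boxk ℓ k, uk ℓ x t y) ≤ uk ℓ x t (fun _ => ℓ / 2)) ∧
    -- (a) Utilitarian
    (∀ n : ℕ, 0 < n → ∀ x : Fin n → ℝ, ∀ t : Fin n → Fin k → ℤ,
      (∀ i, x i ∈ Set.Icc 0 ℓ) → (∀ i j, t i j = 0 ∨ t i j = 1) →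
      (1/2) * (⨆ y ∈ boxk ℓ k, ∑ i, uk ℓ (x i) (t i) y) ≤
        ∑ i, uk ℓ (x i) (t i) (fun _ => ℓ / 2)) ∧
    -- (a) Happiness
    (∀ n : ℕ, 0 < n → ∀ x : Fin n → ℝ, ∀ t : Fin n → Fin k → ℤ,
      (∀ i, x i ∈ Set.Icc 0 ℓ) → (∀ i j, t i j = 0 ∨ t i j = 1) →
      (1/2) * (⨆ y ∈ boxk ℓ k, ⨅ i,
          uk ℓ (x i) (t i) y / (⨆ y' ∈ boxk ℓ k, uk ℓ (x i) (t i) y')) ≤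
        ⨅ i, uk ℓ (x i) (t i) (fun _ => ℓ / 2) /
            (⨆ y' ∈ boxk ℓ k, uk ℓ (x i) (t i) y'))) ∧
    -- (b) Fixed^{0,-1}: per-agent guarantee
    ((∀ x ∈ Set.Icc 0 ℓ, ∀ t : Fin k → ℤ, (∀ j, t j = -1 ∨ t j = 0) →
      (((k / 2 : ℕ) : ℝ) / (k : ℝ)) * (⨆ y ∈ boxk ℓ k, uk ℓ x t y) ≤
        uk ℓ x t (fun j => if (j : ℕ) < (k + 1) / 2 then 0 else ℓ)) ∧
    -- (b) Utilitarian
    (∀ n : ℕ, 0 < n → ∀ x : Fin n → ℝ, ∀ t : Fin n → Fin k → ℤ,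
      (∀ i, x i ∈ Set.Icc 0 ℓ) → (∀ i j, t i j = -1 ∨ t i j = 0) →
      (((k / 2 : ℕ) : ℝ) / (k : ℝ)) * (⨆ y ∈ boxk ℓ k, ∑ i, uk ℓ (x i) (t i) y) ≤
        ∑ i, uk ℓ (x i) (t i) (fun j => if (j : ℕ) < (k + 1) / 2 then 0 else ℓ)) ∧
    -- (b) Happiness
    (∀ n : ℕ, 0 < n → ∀ x : Fin n → ℝ, ∀ t : Fin n → Fin k → ℤ,
      (∀ i, x i ∈ Set.Icc 0 ℓ) → (∀ i j, t i j = -1 ∨ t i j = 0) →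
      (((k / 2 : ℕ) : ℝ) / (k : ℝ)) * (⨆ y ∈ boxk ℓ k, ⨅ i,
          uk ℓ (x i) (t i) y / (⨆ y' ∈ boxk ℓ k, uk ℓ (x i) (t i) y')) ≤
        ⨅ i, uk ℓ (x i) (t i) (fun j => if (j : ℕ) < (k + 1) / 2 then 0 else ℓ) /
            (⨆ y' ∈ boxk ℓ k, uk ℓ (x i) (t i) y'))) := by
  obtain ⟨agentA, utilA, happyA⟩ := approx_objectives_of_agentwise_le _ (by norm_num)
    (fun _ hx t => uk_nonneg hx t (const_half_mem_boxk (hx.1.trans hx.2)))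
    fun _ hx _ ht _ hy => half_mul_uk_le_uk_const_half hx ht hy
  obtain ⟨agentB, utilB, happyB⟩ := approx_objectives_of_agentwise_le _ (by positivity)
    (fun _ hx t => uk_nonneg hx t (split_mem_boxk (hx.1.trans hx.2)))
    fun _ hx _ ht _ hy => floor_half_div_mul_uk_le_uk_split hx ht hy
  exact ⟨⟨agentA, fun n _ => utilA n, fun n _ => happyA n⟩,
    ⟨agentB, fun n _ => utilB n, fun n _ => happyB n⟩⟩

/-- `Fixed^{0,1}` (every facility at `ℓ/2`, for preferences in
`{0,1}^k`) and `Fixed^{0,-1}` (`⌈k/2⌉` facilities at `0` and `⌊k/2⌋` at `ℓ`,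
for preferences in `{-1,0}^k`) achieve their Egalitarian guarantees (`1/2`,
resp. `⌊k/2⌋/k`) also per agent, and hence for the Utilitarian and the
Happiness objectives. -/
theorem fixed01_fixed0m1_utilitarian_happiness_approx
    (ℓ : ℝ) (hℓ : 0 < ℓ) (k : ℕ) (hk : 0 < k) :
    -- (a) Fixed^{0,1}: per-agent guarantee
    ((∀ x ∈ Set.Icc 0 ℓ, ∀ t : Fin k → ℤ, (∀ j, t j = 0 ∨ t j = 1) →
      (1/2) * (⨆ y ∈ boxk ℓ k, uk ℓ x t y) ≤ uk ℓ x t (fun _ => ℓ / 2)) ∧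
    -- (a) Utilitarian
    (∀ n : ℕ, 0 < n → ∀ x : Fin n → ℝ, ∀ t : Fin n → Fin k → ℤ,
      (∀ i, x i ∈ Set.Icc 0 ℓ) → (∀ i j, t i j = 0 ∨ t i j = 1) →
      (1/2) * (⨆ y ∈ boxk ℓ k, ∑ i, uk ℓ (x i) (t i) y) ≤
        ∑ i, uk ℓ (x i) (t i) (fun _ => ℓ / 2)) ∧
    -- (a) Happiness
    (∀ n : ℕ, 0 < n → ∀ x : Fin n → ℝ, ∀ t : Fin n → Fin k → ℤ,
      (∀ i, x i ∈ Set.Icc 0 ℓ) → (∀ i j, t i j = 0 ∨ t i j = 1) →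
      (1/2) * (⨆ y ∈ boxk ℓ k, ⨅ i,
          uk ℓ (x i) (t i) y / (⨆ y' ∈ boxk ℓ k, uk ℓ (x i) (t i) y')) ≤
        ⨅ i, uk ℓ (x i) (t i) (fun _ => ℓ / 2) /
            (⨆ y' ∈ boxk ℓ k, uk ℓ (x i) (t i) y'))) ∧
    -- (b) Fixed^{0,-1}: per-agent guarantee
    ((∀ x ∈ Set.Icc 0 ℓ, ∀ t : Fin k → ℤ, (∀ j, t j = -1 ∨ t j = 0) →
      (((k / 2 : ℕ) : ℝ) / (k : ℝ)) * (⨆ y ∈ boxk ℓ k, uk ℓ x t y) ≤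
        uk ℓ x t (fun j => if (j : ℕ) < (k + 1) / 2 then 0 else ℓ)) ∧
    -- (b) Utilitarian
    (∀ n : ℕ, 0 < n → ∀ x : Fin n → ℝ, ∀ t : Fin n → Fin k → ℤ,
      (∀ i, x i ∈ Set.Icc 0 ℓ) → (∀ i j, t i j = -1 ∨ t i j = 0) →
      (((k / 2 : ℕ) : ℝ) / (k : ℝ)) * (⨆ y ∈ boxk ℓ k, ∑ i, uk ℓ (x i) (t i) y) ≤
        ∑ i, uk ℓ (x i) (t i) (fun j => if (j : ℕ) < (k + 1) / 2 then 0 else ℓ)) ∧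
    -- (b) Happiness
    (∀ n : ℕ, 0 < n → ∀ x : Fin n → ℝ, ∀ t : Fin n → Fin k → ℤ,
      (∀ i, x i ∈ Set.Icc 0 ℓ) → (∀ i j, t i j = -1 ∨ t i j = 0) →
      (((k / 2 : ℕ) : ℝ) / (k : ℝ)) * (⨆ y ∈ boxk ℓ k, ⨅ i,
          uk ℓ (x i) (t i) y / (⨆ y' ∈ boxk ℓ k, uk ℓ (x i) (t i) y')) ≤
        ⨅ i, uk ℓ (x i) (t i) (fun j => if (j : ℕ) < (k + 1) / 2 then 0 else ℓ) /
            (⨆ y' ∈ boxk ℓ k, uk ℓ (x i) (t i) y'))) :=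
  fixed01_fixed0m1_utilitarian_happiness_approx_general ℓ k
end
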